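/- arXiv:cs/0610111 — 6 statements merged into one kernel-verified Lean document; each statement's English description precedes it below -/
import Mathlib

section
/- Let G = (V, E) be a finite simple graph with max degree d*, and let B be a random subset of E such that Pr((i,j) ∈ B) ≤ ε for every edge (i,j). For the pairwise MRF bounds log Ẑ_LB, log Ẑ_UB defined by summing componentwise log-partition functions plus minimal/maximal contributions of edges in B, we have E[log Ẑ_UB − log Ẑ_LB] ≤ ε (d*+1) log Z. -/
open scoped BigOperators

/-- Total energy of an assignment `x` for a pairwise MRF with node potentials `φ`
and edge potentials `ψ`, over the edge set `E` (ordered pairs, each edge once). -/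
noncomputable def mrfEnergy {V S : Type*} [Fintype V]
    (E : Finset (V × V)) (φ : V → S → ℝ) (ψ : V × V → S → S → ℝ) (x : V → S) : ℝ :=
  ∑ v, φ v (x v) + ∑ e ∈ E, ψ e (x e.1) (x e.2)

/-- Partition function of the pairwise MRF. -/
noncomputable def mrfZ {V S : Type*} [Fintype V] [DecidableEq V] [Fintype S]
    (E : Finset (V × V)) (φ : V → S → ℝ) (ψ : V × V → S → S → ℝ) : ℝ :=
  ∑ x : V → S, Real.exp (mrfEnergy E φ ψ x)

/-- `ψ_e^U`, the maximum of the edge potential over `Σ²`. -/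
noncomputable def psiU {V S : Type*} [Fintype S] [Nonempty S]
    (ψ : V × V → S → S → ℝ) (e : V × V) : ℝ := ⨆ p : S × S, ψ e p.1 p.2

/-- `ψ_e^L`, the minimum of the edge potential over `Σ²`. -/
noncomputable def psiL {V S : Type*} [Fintype S] [Nonempty S]
    (ψ : V × V → S → S → ℝ) (e : V × V) : ℝ := ⨅ p : S × S, ψ e p.1 p.2

/-- Energy of an assignment restricted to a vertex set `A` (node potentials of
vertices in `A`, and edge potentials of the edges of `E'` inside `A`). -/
noncomputable def compEnergy {V S : Type*} [Fintype V] [DecidableEq V]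
    (E' : Finset (V × V)) (φ : V → S → ℝ) (ψ : V × V → S → S → ℝ)
    (A : Finset V) (x : V → S) : ℝ :=
  ∑ v ∈ A, φ v (x v) + ∑ e ∈ E'.filter (fun e => e.1 ∈ A), ψ e (x e.1) (x e.2)

/-- Partition function of the MRF restricted to the vertex set `A`
(assignments are normalized to take the fixed value `σ0` outside of `A`). -/
noncomputable def compZ {V S : Type*} [Fintype V] [DecidableEq V] [Fintype S] [DecidableEq S]
    (E' : Finset (V × V)) (φ : V → S → ℝ) (ψ : V × V → S → S → ℝ)
    (A : Finset V) (σ0 : S) : ℝ :=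
  ∑ x ∈ Finset.univ.filter (fun x : V → S => ∀ v, v ∉ A → x v = σ0),
    Real.exp (compEnergy E' φ ψ A x)

set_option linter.unusedSectionVars false
set_option linter.unreachableTactic false
set_option linter.unusedTactic false
set_option maxHeartbeats 1600000

open scoped BigOperators

section VizingCore
variable {V : Type*} [Fintype V] [DecidableEq V] {N : ℕ}


/-- A proper partial edge coloring structure. -/
structure IsPC (adj : V → V → Prop) (c : V → V → Option (Fin N)) : Prop where
  symm : ∀ u v, c u v = c v u
  dom : ∀ u v, (c u v).isSome → adj u v
  proper : ∀ v u w k, c v u = some k → c v w = some k → u = w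

/-- color `k` is unused at `v`. -/
def freeAt (c : V → V → Option (Fin N)) (v : V) (k : Fin N) : Prop :=
  ∀ u, c v u ≠ some k

/-- "missing exactly the edge (a,b)" spec. -/
def MS (adj : V → V → Prop) (c : V → V → Option (Fin N)) (a b : V) : Prop :=
  c a b = none ∧ ∀ u v, adj u v → ¬((u = a ∧ v = b) ∨ (u = b ∧ v = a)) → (c u v).isSome

variable {adj : V → V → Prop}

theorem exists_free [DecidableRel adj] {c : V → V → Option (Fin N)}
    (hc : IsPC adj c) {Δ : ℕ} (hΔ : Δ < N)
    (v : V) (hdeg : (Finset.univ.filter (fun u => adj v u)).card ≤ Δ) :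
    ∃ k, freeAt c v k := by
  classical
  haveI : Nonempty V := ⟨v⟩
  set U : Finset (Fin N) := Finset.univ.filter (fun k => ¬ freeAt c v k) with hU
  have hcard : U.card ≤ Δ := by
    set g : Fin N → V := fun k =>
      if h : ∃ u, c v u = some k then h.choose else Classical.arbitrary V with hg
    have hgspec : ∀ k ∈ U, c v (g k) = some k := by
      intro k hk
      have hex : ∃ u, c v u = some k := by
        by_contra hne; push_neg at hne; exact (Finset.mem_filter.1 hk).2 hne
      simp only [hg, dif_pos hex]
      exact hex.choose_spec
    calc U.card ≤ (Finset.univ.filter (fun u => adj v u)).card := by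
          apply Finset.card_le_card_of_injOn g
          · intro k hk
            simp only [Finset.mem_coe, Finset.mem_filter, Finset.mem_univ, true_and]
            exact hc.dom v _ (by rw [hgspec k hk]; rfl)
          · intro k1 h1 k2 h2 he
            have e1 := hgspec k1 h1
            have e2 := hgspec k2 h2
            rw [he, e2] at e1
            exact (Option.some.inj e1).symm
      _ ≤ Δ := hdeg
  have hne : (Uᶜ : Finset (Fin N)).Nonempty := by
    rw [← Finset.card_pos, Finset.card_compl]
    have : (Fintype.card (Fin N)) = N := by simp
    omega
  obtain ⟨k, hk⟩ := hne
  refine ⟨k, ?_⟩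
  simp only [Finset.mem_compl, hU, Finset.mem_filter, Finset.mem_univ, true_and, not_not] at hk
  exact hk

/-- set an (uncolored) edge. -/
def setE (c : V → V → Option (Fin N)) (a b : V) (k : Fin N) : V → V → Option (Fin N) :=
  fun u v => if (u = a ∧ v = b) ∨ (u = b ∧ v = a) then some k else c u v

/-- unset an edge. -/
def unsetE (c : V → V → Option (Fin N)) (a b : V) : V → V → Option (Fin N) :=
  fun u v => if (u = a ∧ v = b) ∨ (u = b ∧ v = a) then none else c u v

theorem unsetE_pc {c : V → V → Option (Fin N)} (hc : IsPC adj c) (a b : V) :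
    IsPC adj (unsetE c a b) := by
  constructor
  · intro u v; unfold unsetE
    by_cases h : (u = a ∧ v = b) ∨ (u = b ∧ v = a)
    · rw [if_pos h, if_pos (by tauto)]
    · rw [if_neg h, if_neg (by tauto), hc.symm]
  · intro u v h; unfold unsetE at h
    by_cases hp : (u = a ∧ v = b) ∨ (u = b ∧ v = a)
    · rw [if_pos hp] at h; simp at h
    · rw [if_neg hp] at h; exact hc.dom u v h
  · intro v u w k hu hw
    unfold unsetE at hu hw
    by_cases h1 : (v = a ∧ u = b) ∨ (v = b ∧ u = a)
    · rw [if_pos h1] at hu; simp at hu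
    · by_cases h2 : (v = a ∧ w = b) ∨ (v = b ∧ w = a)
      · rw [if_pos h2] at hw; simp at hw
      · rw [if_neg h1] at hu; rw [if_neg h2] at hw
        exact hc.proper v u w k hu hw

theorem unsetE_free {c : V → V → Option (Fin N)} {a b v : V} {k : Fin N}
    (h : freeAt c v k) : freeAt (unsetE c a b) v k := by
  intro u; unfold unsetE
  by_cases hp : (v = a ∧ u = b) ∨ (v = b ∧ u = a)
  · rw [if_pos hp]; simp
  · rw [if_neg hp]; exact h u

theorem setE_pc {c : V → V → Option (Fin N)} (hc : IsPC adj c) {a b : V} {k : Fin N}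
    (hadj : adj a b) (hadj' : adj b a) (hab : a ≠ b)
    (hfa : freeAt c a k) (hfb : freeAt c b k) :
    IsPC adj (setE c a b k) := by
  constructor
  · intro u v; unfold setE
    by_cases h : (u = a ∧ v = b) ∨ (u = b ∧ v = a)
    · rw [if_pos h, if_pos (by tauto)]
    · rw [if_neg h, if_neg (by tauto), hc.symm]
  · intro u v h; unfold setE at h
    by_cases hp : (u = a ∧ v = b) ∨ (u = b ∧ v = a)
    · rcases hp with ⟨h1, h2⟩ | ⟨h1, h2⟩ <;> subst h1 <;> subst h2 <;> assumption
    · rw [if_neg hp] at h; exact hc.dom u v h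
  · intro v u w k' hu hw
    unfold setE at hu hw
    by_cases h1 : (v = a ∧ u = b) ∨ (v = b ∧ u = a)
    · rw [if_pos h1] at hu
      by_cases h2 : (v = a ∧ w = b) ∨ (v = b ∧ w = a)
      · rw [if_pos h2] at hw
        rcases h1 with ⟨hv, hu'⟩ | ⟨hv, hu'⟩ <;> rcases h2 with ⟨hv2, hw'⟩ | ⟨hv2, hw'⟩ <;>
          subst_vars <;> first | rfl | (exact absurd rfl hab) | (exact absurd hv2 (by tauto))
      · rw [if_neg h2] at hw
        exfalso
        have hk : k' = k := (Option.some.inj hu).symm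
        subst hk
        rcases h1 with ⟨hv, -⟩ | ⟨hv, -⟩
        · subst hv; exact hfa w hw
        · subst hv; exact hfb w hw
    · rw [if_neg h1] at hu
      by_cases h2 : (v = a ∧ w = b) ∨ (v = b ∧ w = a)
      · rw [if_pos h2] at hw
        exfalso
        have hk : k' = k := (Option.some.inj hw).symm
        subst hk
        rcases h2 with ⟨hv, -⟩ | ⟨hv, -⟩
        · subst hv; exact hfa u hu
        · subst hv; exact hfb u hu
      · rw [if_neg h2] at hw
        exact hc.proper v u w k' hu hw







section Swap

variable (α τ : Fin N)

def csw : Fin N → Fin N := fun k => if k = α then τ else if k = τ then α else k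

theorem csw_csw (k : Fin N) : csw α τ (csw α τ k) = k := by
  unfold csw
  by_cases h1 : k = α
  · rw [if_pos h1]
    by_cases h2 : τ = α
    · rw [if_pos h2, h2, h1]
    · rw [if_neg h2, if_pos rfl, h1]
  · rw [if_neg h1]
    by_cases h2 : k = τ
    · rw [if_pos h2, if_pos rfl, h2]
    · rw [if_neg h2, if_neg h1, if_neg h2]

open Classical in
noncomputable def swapC (c : V → V → Option (Fin N)) (C : V → Prop) : V → V → Option (Fin N) :=
  fun u v => if C u ∨ C v then (c u v).map (csw α τ) else c u v

variable {c : V → V → Option (Fin N)} {C : V → Prop}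

theorem swapC_mem (u v : V) (h : C u ∨ C v) :
    swapC α τ c C u v = (c u v).map (csw α τ) := by
  unfold swapC; rw [if_pos h]

theorem swapC_some_iff {u v : V} (h : C u ∨ C v) {k : Fin N} :
    swapC α τ c C u v = some k ↔ c u v = some (csw α τ k) := by
  rw [swapC_mem α τ u v h]
  cases hc : c u v with
  | none => simp
  | some k' =>
      simp only [Option.map_some]
      constructor
      · intro h'
        have := Option.some.inj h'
        rw [← this, csw_csw]
      · intro h'
        have := Option.some.inj h'
        rw [this, csw_csw]

theorem swapC_notmem {u : V} (hu : ¬ C u)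
    (hc : IsPC adj c)
    (hcl : ∀ a b, C a → (c a b = some α ∨ c a b = some τ) → C b) (v : V) :
    swapC α τ c C u v = c u v := by
  classical
  unfold swapC
  by_cases h : C u ∨ C v
  · have hv : C v := h.resolve_left hu
    cases hcv : c u v with
    | none => simp
    | some k =>
        rw [if_pos h]
        simp only [Option.map_some]
        have hk : ¬ (k = α ∨ k = τ) := by
          intro hk
          apply hu
          refine hcl v u hv ?_
          rw [hc.symm v u, hcv]
          rcases hk with h | h <;> [left; right] <;> rw [h]
        push_neg at hk
        unfold csw
        rw [if_neg hk.1, if_neg hk.2]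
  · rw [if_neg h]

theorem swapC_pc (hc : IsPC adj c)
    (hcl : ∀ a b, C a → (c a b = some α ∨ c a b = some τ) → C b) :
    IsPC adj (swapC α τ c C) := by
  classical
  constructor
  · intro u v
    unfold swapC
    rw [hc.symm u v]
    by_cases h : C u ∨ C v
    · rw [if_pos h, if_pos (by tauto)]
    · rw [if_neg h, if_neg (by tauto)]
  · intro u v h
    apply hc.dom u v
    unfold swapC at h
    by_cases hp : C u ∨ C v
    · rw [if_pos hp] at h; rwa [Option.isSome_map] at h
    · rwa [if_neg hp] at h
  · intro v u w k hu hw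
    by_cases hv : C v
    · rw [swapC_some_iff α τ (Or.inl hv)] at hu hw
      exact hc.proper v u w _ hu hw
    · rw [swapC_notmem α τ hv hc hcl] at hu hw
      exact hc.proper v u w k hu hw

theorem swapC_free_mem {v : V} (hv : C v) (k : Fin N) :
    (freeAt (swapC α τ c C) v k ↔ freeAt c v (csw α τ k)) := by
  unfold freeAt
  constructor
  · intro h u hcu
    exact h u ((swapC_some_iff α τ (Or.inl hv)).2 hcu)
  · intro h u hcu
    exact h u ((swapC_some_iff α τ (Or.inl hv)).1 hcu)

theorem swapC_free_notmem {v : V} (hv : ¬ C v)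
    (hc : IsPC adj c)
    (hcl : ∀ a b, C a → (c a b = some α ∨ c a b = some τ) → C b) (k : Fin N) :
    (freeAt (swapC α τ c C) v k ↔ freeAt c v k) := by
  unfold freeAt
  constructor <;> intro h u
  · rw [← swapC_notmem α τ hv hc hcl u]; exact h u
  · rw [swapC_notmem α τ hv hc hcl u]; exact h u

theorem swapC_isSome (u v : V) :
    ((swapC α τ c C) u v).isSome = (c u v).isSome := by
  classical
  unfold swapC
  by_cases h : C u ∨ C v
  · rw [if_pos h, Option.isSome_map]
  · rw [if_neg h]

theorem swapC_none (u v : V) (h : c u v = none) :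
    (swapC α τ c C) u v = none := by
  classical
  unfold swapC
  by_cases hp : C u ∨ C v
  · rw [if_pos hp, h]; rfl
  · rw [if_neg hp]; exact h

end Swap

section Walk

variable {c : V → V → Option (Fin N)} {α τ : Fin N}

theorem walk_lemma (hc : IsPC adj c)
    (x : V) (hxα : ∀ u, c x u ≠ some α)
    {u₁ u₂ : V}
    (h₁ : Relation.ReflTransGen (fun a b => c a b = some α ∨ c a b = some τ) x u₁)
    (h₂ : Relation.ReflTransGen (fun a b => c a b = some α ∨ c a b = some τ) x u₂)
    (hu₁ : ∀ u, c u₁ u ≠ some τ) (hu₂ : ∀ u, c u₂ u ≠ some τ)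
    (hne : u₁ ≠ u₂) : False := by
  classical
  set pα : V → Option V := fun v => if h : ∃ u, c v u = some α then some h.choose else none with hpα
  set pτ : V → Option V := fun v => if h : ∃ u, c v u = some τ then some h.choose else none with hpτ
  have hpα_eq : ∀ v u, c v u = some α → pα v = some u := by
    intro v u h
    have hex : ∃ u, c v u = some α := ⟨u, h⟩
    simp only [hpα, dif_pos hex]
    exact congrArg some (hc.proper v _ u α hex.choose_spec h)
  have hpτ_eq : ∀ v u, c v u = some τ → pτ v = some u := by
    intro v u h
    have hex : ∃ u, c v u = some τ := ⟨u, h⟩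
    simp only [hpτ, dif_pos hex]
    exact congrArg some (hc.proper v _ u τ hex.choose_spec h)
  have hpα_some : ∀ v u, pα v = some u → c v u = some α := by
    intro v u h
    simp only [hpα] at h
    by_cases hex : ∃ w, c v w = some α
    · rw [dif_pos hex] at h
      have := hex.choose_spec
      rwa [Option.some.inj h] at this
    · rw [dif_neg hex] at h; simp at h
  have hpτ_some : ∀ v u, pτ v = some u → c v u = some τ := by
    intro v u h
    simp only [hpτ] at h
    by_cases hex : ∃ w, c v w = some τ
    · rw [dif_pos hex] at h
      have := hex.choose_spec
      rwa [Option.some.inj h] at this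
    · rw [dif_neg hex] at h; simp at h
  have hpα_symm : ∀ v u, pα v = some u → pα u = some v := by
    intro v u h
    exact hpα_eq u v (by rw [hc.symm u v]; exact hpα_some v u h)
  have hpτ_symm : ∀ v u, pτ v = some u → pτ u = some v := by
    intro v u h
    exact hpτ_eq u v (by rw [hc.symm u v]; exact hpτ_some v u h)
  have hpτ_none : ∀ v, (∀ u, c v u ≠ some τ) → pτ v = none := by
    intro v h
    simp only [hpτ]
    rw [dif_neg]
    push_neg
    exact h
  -- the walk
  let W : ℕ → Option V := fun n =>
    Nat.rec (some x) (fun n ih => ih.bind (fun v => if Even n then pτ v else pα v)) n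
  have hW0 : W 0 = some x := rfl
  have hWs : ∀ n, W (n + 1) = (W n).bind (fun v => if Even n then pτ v else pα v) := fun n => rfl
  have hprev : ∀ n v, W (n+1) = some v →
      ∃ u, W n = some u ∧ ((Even n → pτ v = some u) ∧ (¬ Even n → pα v = some u)) := by
    intro n v h
    rw [hWs n] at h
    cases hw : W n with
    | none => rw [hw] at h; simp at h
    | some u =>
        rw [hw] at h
        simp only [Option.bind_some] at h
        refine ⟨u, rfl, ?_, ?_⟩
        · intro he; rw [if_pos he] at h; exact hpτ_symm u v h
        · intro he; rw [if_neg he] at h; exact hpα_symm u v h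
  have hdead : ∀ m k, W m = none → W (m + k) = none := by
    intro m k hm
    induction k with
    | zero => exact hm
    | succ k ih => rw [← Nat.add_assoc, hWs, ih]; rfl
  have hreach : ∀ v, Relation.ReflTransGen (fun a b => c a b = some α ∨ c a b = some τ) x v →
      ∃ n, W n = some v := by
    intro v h
    induction h with
    | refl => exact ⟨0, rfl⟩
    | @tail b v' hab hstep ih =>
        obtain ⟨n, hn⟩ := ih
        rcases hstep with hα | hτ
        · rcases Nat.even_or_odd n with he | ho
          · rcases Nat.eq_zero_or_pos n with h0 | hpos
            · subst h0
              rw [hW0] at hn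
              have : x = b := Option.some.inj hn
              subst this
              exact absurd hα (hxα v')
            · obtain ⟨m, rfl⟩ : ∃ m, n = m + 1 := ⟨n - 1, by omega⟩
              have hm_odd : ¬ Even m := by
                rcases Nat.even_or_odd m with h | h
                · exfalso; rcases he with ⟨k, hk⟩; rcases h with ⟨j, hj⟩; omega
                · simpa [Nat.even_iff, Nat.odd_iff] using h
              obtain ⟨u, hu, -, hαprev⟩ := hprev m b hn
              have := hαprev hm_odd
              rw [hpα_eq b v' hα] at this
              exact ⟨m, by rw [hu, ← Option.some.inj this]⟩
          · refine ⟨n + 1, ?_⟩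
            rw [hWs, hn]
            simp only [Option.bind_some]
            rw [if_neg (by simpa [Nat.even_iff, Nat.odd_iff] using ho), hpα_eq b v' hα]
        · rcases Nat.even_or_odd n with he | ho
          · refine ⟨n + 1, ?_⟩
            rw [hWs, hn]
            simp only [Option.bind_some]
            rw [if_pos he, hpτ_eq b v' hτ]
          · obtain ⟨m, rfl⟩ : ∃ m, n = m + 1 := by
              rcases ho with ⟨k, hk⟩; exact ⟨2*k, by omega⟩
            have hm_even : Even m := by
              rcases ho with ⟨k, hk⟩; exact ⟨k, by omega⟩
            obtain ⟨u, hu, hτprev, -⟩ := hprev m b hn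
            have := hτprev hm_even
            rw [hpτ_eq b v' hτ] at this
            exact ⟨m, by rw [hu, ← Option.some.inj this]⟩
  -- terminal positions
  have hterm : ∀ v, (∀ u, c v u ≠ some τ) → ∀ a, W a = some v → Even a ∧ W (a+1) = none := by
    intro v hv a ha
    have haE : Even a := by
      by_contra hodd
      obtain ⟨m, rfl⟩ : ∃ m, a = m + 1 := by
        rcases Nat.even_or_odd a with h | h
        · exact absurd h hodd
        · rcases h with ⟨k, hk⟩; exact ⟨2*k, by omega⟩
      have hm_even : Even m := by
        rcases Nat.even_or_odd m with h | h
        · exact h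
        · exfalso; apply hodd; rcases h with ⟨k, hk⟩; exact ⟨k+1, by omega⟩
      obtain ⟨u, -, hτprev, -⟩ := hprev m v ha
      have := hτprev hm_even
      rw [hpτ_none v hv] at this
      simp at this
    refine ⟨haE, ?_⟩
    rw [hWs, ha]
    simp only [Option.bind_some]
    rw [if_pos haE, hpτ_none v hv]
  obtain ⟨a, ha⟩ := hreach u₁ h₁
  obtain ⟨b, hb⟩ := hreach u₂ h₂
  obtain ⟨haE, ha1⟩ := hterm u₁ hu₁ a ha
  obtain ⟨hbE, hb1⟩ := hterm u₂ hu₂ b hb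
  rcases lt_trichotomy a b with h | h | h
  · have : W b = none := by
      have := hdead (a+1) (b - (a+1)) ha1
      rwa [show a + 1 + (b - (a+1)) = b by omega] at this
    rw [this] at hb; simp at hb
  · subst h
    rw [ha] at hb
    exact hne (Option.some.inj hb)
  · have : W a = none := by
      have := hdead (b+1) (a - (b+1)) hb1
      rwa [show b + 1 + (a - (b+1)) = a by omega] at this
    rw [this] at ha; simp at ha

end Walk









section Fan

variable (adj : V → V → Prop) (x y₀ : V)

/-- Vizing fan, stored in reverse order (ends with `y₀`). -/
def IsFan (c : V → V → Option (Fin N)) : List V → Prop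
  | [] => False
  | [z] => z = y₀
  | z :: w :: t => IsFan c (w :: t) ∧ adj x z ∧ z ∉ (w :: t) ∧
      ∃ k, c x z = some k ∧ freeAt c w k

variable {adj x y₀}

theorem fan_ne_nil {c : V → V → Option (Fin N)} {l : List V} (h : IsFan adj x y₀ c l) :
    l ≠ [] := by
  intro he; subst he; exact h

theorem fan_mem_adj {c : V → V → Option (Fin N)} (hxy₀ : adj x y₀) :
    ∀ {l : List V}, IsFan adj x y₀ c l → ∀ v ∈ l, adj x v
  | [], h => by exact absurd h (by simp [IsFan])
  | [z], h => by
      intro v hv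
      simp only [List.mem_singleton] at hv
      have hz : z = y₀ := h
      rw [hv, hz]; exact hxy₀
  | z :: w :: t, h => by
      intro v hv
      obtain ⟨ht, hadj, -, -⟩ := h
      rcases List.mem_cons.1 hv with rfl | hv
      · exact hadj
      · exact fan_mem_adj hxy₀ ht v hv

theorem fan_nodup {c : V → V → Option (Fin N)} :
    ∀ {l : List V}, IsFan adj x y₀ c l → l.Nodup
  | [], h => by exact absurd h (by simp [IsFan])
  | [z], _ => by simp
  | z :: w :: t, h => by
      obtain ⟨ht, -, hz, -⟩ := h
      exact List.nodup_cons.2 ⟨hz, fan_nodup ht⟩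

theorem fan_suffix {c : V → V → Option (Fin N)} :
    ∀ (l₁ l₂ : List V), IsFan adj x y₀ c (l₁ ++ l₂) → l₂ ≠ [] → IsFan adj x y₀ c l₂
  | [], l₂, h, _ => h
  | a :: l₁, l₂, h, hne => by
      apply fan_suffix l₁ l₂ _ hne
      cases hl : l₁ ++ l₂ with
      | nil =>
          exact absurd (List.append_eq_nil_iff.mp hl).2 hne
      | cons w t =>
          have h' : IsFan adj x y₀ c (a :: w :: t) := by rwa [List.cons_append, hl] at h
          exact h'.1

theorem fan_last {c : V → V → Option (Fin N)} :
    ∀ {l : List V}, IsFan adj x y₀ c l → y₀ ∈ l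
  | [], h => by exact absurd h (by simp [IsFan])
  | [z], h => by rw [show z = y₀ from h]; simp
  | z :: w :: t, h => List.mem_cons_of_mem z (fan_last h.1)

/-- the main rotation lemma: shift the colors along a fan so that the uncolored
edge moves from `(x, y₀)` to `(x, head)`. -/
theorem rot (hadjsymm : ∀ u v, adj u v → adj v u) (hirr : ∀ v, ¬ adj v v)
    (hxy₀ : adj x y₀)
    {c : V → V → Option (Fin N)} (hc : IsPC adj c) (hms : MS adj c x y₀) :
    ∀ (t : List V) (z : V), IsFan adj x y₀ c (z :: t) →
      ∃ c', IsPC adj c' ∧ MS adj c' x z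
        ∧ (∀ u v, u ≠ x → v ≠ x → c' u v = c u v)
        ∧ (∀ u, u ∉ (z :: t) → c' x u = c x u)
        ∧ (∀ k, freeAt c x k → freeAt c' x k)
        ∧ (∀ k, freeAt c z k → freeAt c' z k)
        ∧ (∀ u k, u ∈ (z :: t) → c' x u = some k → ∃ u', u' ∈ (z :: t) ∧ c x u' = some k) := by
  intro t
  induction t with
  | nil =>
      intro z hfan
      have hzy : z = y₀ := hfan
      subst hzy
      refine ⟨c, hc, hms, fun _ _ _ _ => rfl, fun _ _ => rfl, fun _ h => h, fun _ h => h, ?_⟩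
      intro u k hu hcu
      simp only [List.mem_singleton] at hu
      subst hu
      rw [hms.1] at hcu
      exact absurd hcu (by simp)
  | cons w t' ih =>
      intro z hfan
      obtain ⟨ht, hadjz, hznotin, k₀, hk₀, hfreew⟩ := hfan
      obtain ⟨c₁, hc₁, hms₁, h3, h4, h5, h6, h7⟩ := ih w ht
      have hzx : z ≠ x := fun h => hirr x (h ▸ hadjz)
      have hadjw : adj x w := fan_mem_adj hxy₀ ht w (by simp)
      have hwx : w ≠ x := fun h => hirr x (h ▸ hadjw)
      have hzw : z ≠ w := fun h => hznotin (h ▸ List.mem_cons_self (a := w) (l := t'))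
      have hc₁xz : c₁ x z = some k₀ := by rw [h4 z hznotin]; exact hk₀
      set cu := unsetE c₁ x z with hcu
      set c₂ := setE cu x w k₀ with hc₂
      have hcu_val : ∀ u v, cu u v = if (u = x ∧ v = z) ∨ (u = z ∧ v = x) then none else c₁ u v := by
        intro u v; rfl
      have hc₂_val : ∀ u v, c₂ u v = if (u = x ∧ v = w) ∨ (u = w ∧ v = x) then some k₀ else cu u v := by
        intro u v; rfl
      have hcu_pc : IsPC adj cu := unsetE_pc hc₁ x z
      have hfree_cu_x : freeAt cu x k₀ := by
        intro u
        rw [hcu_val]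
        split_ifs with hp
        · simp
        · intro hcc
          have := hc₁.proper x u z k₀ hcc hc₁xz
          exact hp (Or.inl ⟨rfl, this⟩)
      have hfree_cu_w : freeAt cu w k₀ := unsetE_free (h6 k₀ hfreew)
      have hc₂_pc : IsPC adj c₂ := setE_pc hcu_pc hadjw (hadjsymm _ _ hadjw) (Ne.symm hwx) hfree_cu_x hfree_cu_w
      refine ⟨c₂, hc₂_pc, ?_, ?_, ?_, ?_, ?_, ?_⟩
      · constructor
        · rw [hc₂_val, if_neg (by tauto), hcu_val, if_pos (Or.inl ⟨rfl, rfl⟩)]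
        · intro u v hadjuv hnp
          rw [hc₂_val]
          split_ifs with hp
          · simp
          · rw [hcu_val, if_neg (by tauto)]
            exact hms₁.2 u v hadjuv hp
      · intro u v hu hv
        rw [hc₂_val, if_neg (by tauto), hcu_val, if_neg (by tauto)]
        exact h3 u v hu hv
      · intro u hu
        have hu1 : u ≠ z := fun h => hu (by rw [h]; exact List.mem_cons_self (a := z) (l := w :: t'))
        have hu2 : u ≠ w := fun h => hu (by rw [h]; exact List.mem_cons_of_mem z (List.mem_cons_self (a := w) (l := t')))
        have hu3 : u ∉ (w :: t') := fun h => hu (List.mem_cons_of_mem z h)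
        rw [hc₂_val, if_neg (by tauto), hcu_val, if_neg (by tauto)]
        exact h4 u hu3
      · intro κ hκ
        have hκk₀ : κ ≠ k₀ := fun h => hκ z (h ▸ hk₀)
        intro u
        rw [hc₂_val]
        split_ifs with hp
        · intro hcc
          exact hκk₀ (Option.some.inj hcc).symm
        · rw [hcu_val]
          split_ifs with hq
          · simp
          · exact h5 κ hκ u
      · intro κ hκ u
        rw [hc₂_val, if_neg (by tauto), hcu_val]
        split_ifs with hq
        · simp
        · have hux : u ≠ x := fun h => hq (Or.inr ⟨rfl, h⟩)
          rw [h3 z u hzx hux]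
          exact hκ u
      · intro u κ hu hcc
        rw [hc₂_val] at hcc
        by_cases hp : (x = u ∧ u = w) ∨ True
        rotate_left
        · exact absurd (Or.inr trivial) hp
        clear hp
        by_cases hp : (x = x ∧ u = w) ∨ (x = w ∧ u = x)
        · rw [if_pos hp] at hcc
          have : κ = k₀ := (Option.some.inj hcc).symm
          subst this
          exact ⟨z, List.mem_cons_self (a := z), hk₀⟩
        · rw [if_neg hp] at hcc
          rw [hcu_val] at hcc
          by_cases hq : (x = x ∧ u = z) ∨ (x = z ∧ u = x)
          · rw [if_pos hq] at hcc; exact absurd hcc (by simp)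
          · rw [if_neg hq] at hcc
            have huz : u ≠ z := fun h => hq (Or.inl ⟨rfl, h⟩)
            have huw : u ∈ (w :: t') := by
              rcases List.mem_cons.1 hu with h | h
              · exact absurd h huz
              · exact h
            obtain ⟨u', hu', hcu'⟩ := h7 u κ huw hcc
            exact ⟨u', List.mem_cons_of_mem z hu', hcu'⟩

end Fan


end VizingCore

section Extend
variable {V : Type*} [Fintype V] [DecidableEq V] {N : ℕ}
variable {adj : V → V → Prop}

theorem csw_left (α τ : Fin N) : csw α τ α = τ := if_pos rfl

theorem csw_right (α τ : Fin N) : csw α τ τ = α := by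
  unfold csw
  by_cases h : τ = α
  · rw [if_pos h, h]
  · rw [if_neg h, if_pos rfl]

theorem csw_other {α τ k : Fin N} (h1 : k ≠ α) (h2 : k ≠ τ) : csw α τ k = k := by
  unfold csw; rw [if_neg h1, if_neg h2]

/-- fans transfer to a recoloring that preserves the relevant colors. -/
theorem fan_transfer {x y₀ : V} {c c' : V → V → Option (Fin N)} {z : V}
    (H : ∀ v, v ≠ z → (c' x v = c x v ∧
      ∀ k, c x v = some k → ∀ u, freeAt c u k → freeAt c' u k)) :
    ∀ (m : List V), IsFan adj x y₀ c m → z ∉ m → IsFan adj x y₀ c' m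
  | [], h, _ => h
  | [v], h, _ => h
  | v₁ :: v₂ :: t, h, hz => by
      obtain ⟨ht, hadj, hnotin, k, hk, hfree⟩ := h
      have hz2 : z ∉ v₂ :: t := fun hh => hz (List.mem_cons_of_mem _ hh)
      have hv₁z : v₁ ≠ z := fun hh => hz (hh ▸ List.mem_cons_self (a := v₁) (l := v₂ :: t))
      refine ⟨fan_transfer H (v₂ :: t) ht hz2, hadj, hnotin, k, ?_, ?_⟩
      · rw [(H v₁ hv₁z).1]; exact hk
      · exact (H v₁ hv₁z).2 k hk v₂ hfree

theorem fan_append {x y₀ : V} {c c' : V → V → Option (Fin N)} {z : V}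
    (H : ∀ v, v ≠ z → (c' x v = c x v ∧
      ∀ k, c x v = some k → ∀ u, freeAt c u k → freeAt c' u k)) :
    ∀ (A m₀ : List V), (∀ a ∈ A, a ≠ z) → m₀ ≠ [] →
      IsFan adj x y₀ c (A ++ m₀) → IsFan adj x y₀ c' m₀ → IsFan adj x y₀ c' (A ++ m₀)
  | [], m₀, _, _, _, h' => h'
  | a :: A', m₀, hA, hm₀, h, h' => by
      have hAz : ∀ b ∈ A', b ≠ z := fun b hb => hA b (List.mem_cons_of_mem a hb)
      have haz : a ≠ z := hA a (List.mem_cons_self (a := a) (l := A'))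
      cases hl : A' ++ m₀ with
      | nil => exact absurd (List.append_eq_nil_iff.mp hl).2 hm₀
      | cons w t =>
          have hfull : IsFan adj x y₀ c (a :: w :: t) := by rwa [List.cons_append, hl] at h
          obtain ⟨ht, hadj, hnotin, k, hk, hfree⟩ := hfull
          have hih : IsFan adj x y₀ c' (A' ++ m₀) :=
            fan_append H A' m₀ hAz hm₀ (by rwa [hl]) h'
          have : IsFan adj x y₀ c' (a :: w :: t) := by
            refine ⟨by rwa [hl] at hih, hadj, hnotin, k, ?_, ?_⟩
            · rw [(H a haz).1]; exact hk
            · exact (H a haz).2 k hk w hfree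
          rw [List.cons_append, hl]
          exact this

/-- helper: color the single missing edge. -/
theorem finish_coloring {x v : V} {c : V → V → Option (Fin N)} {τ : Fin N}
    (hadjsymm : ∀ u w, adj u w → adj w u) (hirr : ∀ w, ¬ adj w w)
    (hc : IsPC adj c) (hms : MS adj c x v) (hadj : adj x v)
    (hfx : freeAt c x τ) (hfv : freeAt c v τ) :
    ∃ c' : V → V → Option (Fin N), IsPC adj c' ∧ ∀ u w, adj u w → (c' u w).isSome := by
  have hxv : x ≠ v := fun h => hirr v (h ▸ hadj)
  refine ⟨setE c x v τ, setE_pc hc hadj (hadjsymm _ _ hadj) hxv hfx hfv, ?_⟩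
  intro u w hadjuw
  unfold setE
  split_ifs with hp
  · rfl
  · exact hms.2 u w hadjuw hp

/-- The key extension step of Vizing's theorem. -/
theorem extend_coloring [DecidableRel adj] {Δ : ℕ}
    (hadjsymm : ∀ u v, adj u v → adj v u) (hirr : ∀ v, ¬ adj v v)
    (hdeg : ∀ v : V, (Finset.univ.filter (fun u => adj v u)).card ≤ Δ)
    (x y₀ : V) (hxy₀ : adj x y₀)
    (c : V → V → Option (Fin (Δ + 1))) (hc : IsPC adj c) (hms : MS adj c x y₀) :
    ∃ c' : V → V → Option (Fin (Δ + 1)), IsPC adj c' ∧ ∀ u v, adj u v → (c' u v).isSome := by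
  classical
  have hΔ : Δ < Δ + 1 := Nat.lt_succ_self Δ
  -- maximal fan
  set FS : Set ℕ := {n | ∃ l, IsFan adj x y₀ c l ∧ l.length = n} with hFS
  have hfan0 : IsFan adj x y₀ c [y₀] := rfl
  have hFSne : FS.Nonempty := ⟨1, [y₀], hfan0, rfl⟩
  have hFSbdd : BddAbove FS := by
    refine ⟨Fintype.card V, ?_⟩
    rintro n ⟨l, hl, rfl⟩
    exact (fan_nodup hl).length_le_card
  obtain ⟨l, hl, hlen⟩ := Nat.sSup_mem hFSne hFSbdd
  have hmax : ∀ z, ¬ IsFan adj x y₀ c (z :: l) := by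
    intro z hz
    have : (z :: l).length ∈ FS := ⟨z :: l, hz, rfl⟩
    have hle := le_csSup hFSbdd this
    rw [← hlen] at hle
    simp only [List.length_cons] at hle
    omega
  obtain ⟨yk, rest, rfl⟩ : ∃ yk rest, l = yk :: rest := by
    cases l with
    | nil => exact absurd hl (by exact fun h => h)
    | cons a b => exact ⟨a, b, rfl⟩
  have hadjyk : adj x yk := fan_mem_adj hxy₀ hl yk List.mem_cons_self
  obtain ⟨τ, hτ⟩ := exists_free hc hΔ yk (hdeg yk)
  by_cases hτx : freeAt c x τ
  · -- Case 1
    obtain ⟨c₁, hc₁, hms₁, h3, h4, h5, h6, h7⟩ := rot hadjsymm hirr hxy₀ hc hms rest yk hl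
    exact finish_coloring hadjsymm hirr hc₁ hms₁ hadjyk (h5 τ hτx) (h6 τ hτ)
  · -- Case 2
    have hxz : ∃ z, c x z = some τ := by
      unfold freeAt at hτx
      push_neg at hτx
      exact hτx
    obtain ⟨z, hcxz⟩ := hxz
    obtain ⟨α, hα⟩ := exists_free hc hΔ x (hdeg x)
    have hατ : α ≠ τ := by
      intro h
      exact hτx (h ▸ hα)
    have hzyk : z ≠ yk := by
      intro h
      exact hτ x (by rw [hc.symm yk x, ← h]; exact hcxz)
    have hzin : z ∈ yk :: rest := by
      by_contra hzout
      apply hmax z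
      refine ⟨hl, hc.dom x z (by rw [hcxz]; rfl), hzout, τ, hcxz, hτ⟩
    have hzy₀ : z ≠ y₀ := by
      intro h
      rw [h, hms.1] at hcxz
      exact absurd hcxz (by simp)
    obtain ⟨A, B, hAB⟩ := List.append_of_mem hzin
    have hBne : B ≠ [] := by
      intro h
      subst h
      have : IsFan adj x y₀ c [z] := fan_suffix A [z] (by rwa [hAB] at hl) (by simp)
      exact hzy₀ this
    obtain ⟨w, B', rfl⟩ : ∃ w B', B = w :: B' := by
      cases B with
      | nil => exact absurd rfl hBne
      | cons a b => exact ⟨a, b, rfl⟩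
    have hfanzB : IsFan adj x y₀ c (z :: w :: B') :=
      fan_suffix A _ (by rwa [hAB] at hl) (by simp)
    obtain ⟨hfan_wB, hadjzx, hznotin, k', hk', hfreewk'⟩ := hfanzB
    have hk'τ : k' = τ := by
      rw [hcxz] at hk'
      exact (Option.some.inj hk').symm
    rw [hk'τ] at hfreewk'
    -- the Kempe component
    set Cs : V → Prop := fun v => Relation.ReflTransGen
      (fun a b => c a b = some α ∨ c a b = some τ) x v with hCs
    have hxC : Cs x := Relation.ReflTransGen.refl
    have hcl : ∀ a b, Cs a → (c a b = some α ∨ c a b = some τ) → Cs b :=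
      fun a b ha h => Relation.ReflTransGen.tail ha h
    have hnodupl : (yk :: rest).Nodup := fan_nodup hl
    have hAne : A ≠ [] := by
      intro h
      rw [h] at hAB
      simp at hAB
      exact hzyk (hAB.1.symm)
    have hwyk : w ≠ yk := by
      obtain ⟨a, A', rfl⟩ : ∃ a A', A = a :: A' := by
        cases A with
        | nil => exact absurd rfl hAne
        | cons a b => exact ⟨a, b, rfl⟩
      rw [List.cons_append] at hAB
      obtain ⟨h1, h2⟩ := List.cons_eq_cons.mp hAB
      have hwin : w ∈ rest := by
        rw [h2]
        exact List.mem_append_right _ (by simp)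
      have hykout : yk ∉ rest := (List.nodup_cons.1 hnodupl).1
      intro h
      rw [← h] at hykout
      exact hykout hwin
    have hzxne : z ≠ x := fun h => hirr x (h ▸ hadjzx)
    have hτfw : freeAt c w τ := hfreewk'
    -- the H-hypothesis for fan transfer under swapping
    by_cases hwC : Cs w
    · -- CASE B : w in the component; swap first, then rotate the full fan.
      have hykC : ¬ Cs yk := by
        intro hykC
        exact walk_lemma hc x hα hwC hykC hτfw hτ hwyk
      set c₁ := swapC α τ c Cs with hc₁def
      have hc₁pc : IsPC adj c₁ := swapC_pc α τ hc hcl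
      have hcx1z : c₁ x z = some α := by
        rw [hc₁def, swapC_some_iff α τ (Or.inl hxC), csw_left]
        exact hcxz
      have Hyp : ∀ v, v ≠ z → (c₁ x v = c x v ∧
          ∀ k, c x v = some k → ∀ u, freeAt c u k → freeAt c₁ u k) := by
        intro v hvz
        have hcol : ∀ k, c x v = some k → k ≠ α ∧ k ≠ τ := by
          intro k hk
          constructor
          · intro h; rw [h] at hk; exact hα v hk
          · intro h; rw [h] at hk; exact hvz (hc.proper x v z τ hk hcxz)
        constructor
        · cases hcv : c x v with
          | none => rw [hc₁def]; exact swapC_none α τ x v hcv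
          | some k =>
              obtain ⟨hk1, hk2⟩ := hcol k hcv
              by_cases hvC : Cs v
              · rw [hc₁def, swapC_mem α τ x v (Or.inl hxC), hcv]
                simp only [Option.map_some]
                rw [csw_other hk1 hk2]
              · rw [hc₁def, swapC_mem α τ x v (Or.inl hxC), hcv]
                simp only [Option.map_some]
                rw [csw_other hk1 hk2]
        · intro k hk u hfu
          obtain ⟨hk1, hk2⟩ := hcol k hk
          by_cases huC : Cs u
          · rw [hc₁def]
            rw [swapC_free_mem α τ huC, csw_other hk1 hk2]
            exact hfu
          · rw [hc₁def]
            rw [swapC_free_notmem α τ huC hc hcl]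
            exact hfu
      have hfan_wB₁ : IsFan adj x y₀ c₁ (w :: B') :=
        fan_transfer Hyp (w :: B') hfan_wB hznotin
      have hfreew₁α : freeAt c₁ w α := by
        rw [hc₁def, swapC_free_mem α τ hwC, csw_left]
        exact hτfw
      have hfanzB₁ : IsFan adj x y₀ c₁ (z :: w :: B') :=
        ⟨hfan_wB₁, hadjzx, hznotin, α, hcx1z, hfreew₁α⟩
      have hAz : ∀ a ∈ A, a ≠ z := by
        intro a ha h
        subst h
        rw [hAB] at hnodupl
        have := List.disjoint_of_nodup_append hnodupl
        exact this ha List.mem_cons_self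
      have hfanl₁ : IsFan adj x y₀ c₁ (yk :: rest) := by
        rw [hAB]
        exact fan_append Hyp A (z :: w :: B') hAz (by simp) (by rwa [hAB] at hl) hfanzB₁
      have hms₁ : MS adj c₁ x y₀ := by
        constructor
        · rw [hc₁def]; exact swapC_none α τ x y₀ hms.1
        · intro u v hadjuv hnp
          rw [hc₁def, swapC_isSome]
          exact hms.2 u v hadjuv hnp
      obtain ⟨c₂, hc₂, hms₂, g3, g4, g5, g6, g7⟩ :=
        rot hadjsymm hirr hxy₀ hc₁pc hms₁ rest yk hfanl₁
      have hfx₂ : freeAt c₂ x τ := by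
        apply g5
        rw [hc₁def, swapC_free_mem α τ hxC, csw_right]
        exact hα
      have hfyk₂ : freeAt c₂ yk τ := by
        apply g6
        rw [hc₁def, swapC_free_notmem α τ hykC hc hcl]
        exact hτ
      exact finish_coloring hadjsymm hirr hc₂ hms₂ hadjyk hfx₂ hfyk₂
    · -- CASE A : w not in the component; rotate the partial fan, then swap.
      obtain ⟨c₁, hc₁, hms₁, g3, g4, g5, g6, g7⟩ :=
        rot hadjsymm hirr hxy₀ hc hms B' w hfan_wB
      have hzout : z ∉ (w :: B') := hznotin
      -- α/τ edges are the same in c and c₁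
      have hedge_iff : ∀ a b, (c₁ a b = some α ∨ c₁ a b = some τ) ↔
          (c a b = some α ∨ c a b = some τ) := by
        have key : ∀ b, (c₁ x b = some α ∨ c₁ x b = some τ) ↔
            (c x b = some α ∨ c x b = some τ) := by
          intro b
          by_cases hb : b ∈ (w :: B')
          · constructor
            · rintro (h | h)
              · obtain ⟨u', hu', hcu'⟩ := g7 b α hb h
                exact absurd hcu' (hα u')
              · obtain ⟨u', hu', hcu'⟩ := g7 b τ hb h
                have : u' = z := hc.proper x u' z τ hcu' hcxz
                subst this
                exact absurd hu' hzout
            · rintro (h | h)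
              · exact absurd h (hα b)
              · have : b = z := hc.proper x b z τ h hcxz
                subst this
                exact absurd hb hzout
          · rw [g4 b hb]
        intro a b
        by_cases hax : a = x
        · rw [hax]; exact key b
        · by_cases hbx : b = x
          · rw [hbx, hc₁.symm a x, hc.symm a x]
            exact key a
          · rw [g3 a b hax hbx]
      have hcl₁ : ∀ a b, Cs a → (c₁ a b = some α ∨ c₁ a b = some τ) → Cs b := by
        intro a b ha h
        exact hcl a b ha ((hedge_iff a b).1 h)
      set c₂ := swapC α τ c₁ Cs with hc₂def
      have hc₂pc : IsPC adj c₂ := swapC_pc α τ hc₁ hcl₁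
      have hfx₂ : freeAt c₂ x τ := by
        rw [hc₂def, swapC_free_mem α τ hxC, csw_right]
        exact g5 α hα
      have hfw₂ : freeAt c₂ w τ := by
        rw [hc₂def, swapC_free_notmem α τ hwC hc₁ hcl₁]
        exact g6 τ hτfw
      have hms₂ : MS adj c₂ x w := by
        constructor
        · rw [hc₂def]; exact swapC_none α τ x w hms₁.1
        · intro u v hadjuv hnp
          rw [hc₂def, swapC_isSome]
          exact hms₁.2 u v hadjuv hnp
      have hadjw : adj x w := fan_mem_adj hxy₀ hfan_wB w List.mem_cons_self
      exact finish_coloring hadjsymm hirr hc₂pc hms₂ hadjw hfx₂ hfw₂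

end Extend

section Outer
variable {V : Type*} [Fintype V] [DecidableEq V]

def adjOf (E : Finset (V × V)) : V → V → Prop :=
  fun u v => (u, v) ∈ E ∨ (v, u) ∈ E

instance (E : Finset (V × V)) : DecidableRel (adjOf E) := fun u v => by
  unfold adjOf; infer_instance

theorem adjOf_symm (E : Finset (V × V)) : ∀ u v, adjOf E u v → adjOf E v u :=
  fun _ _ h => h.symm

theorem adjOf_irr {E : Finset (V × V)} (hs : ∀ e ∈ E, e.1 ≠ e.2) :
    ∀ v, ¬ adjOf E v v := by
  intro v h
  rcases h with h | h <;> exact hs _ h rfl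

theorem adjOf_deg {E : Finset (V × V)} (hs : ∀ e ∈ E, e.1 ≠ e.2) {Δ : ℕ}
    (hdeg : ∀ v : V, (E.filter (fun e => e.1 = v ∨ e.2 = v)).card ≤ Δ) :
    ∀ v : V, (Finset.univ.filter (fun u => adjOf E v u)).card ≤ Δ := by
  intro v
  refine le_trans (Finset.card_le_card_of_injOn
    (fun u => if (v, u) ∈ E then (v, u) else (u, v)) ?_ ?_) (hdeg v)
  · intro u hu
    simp only [Finset.mem_coe, Finset.mem_filter, Finset.mem_univ, true_and] at hu ⊢
    by_cases h : (v, u) ∈ E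
    · rw [if_pos h]; exact ⟨h, Or.inl rfl⟩
    · rw [if_neg h]
      rcases hu with h' | h'
      · exact absurd h' h
      · exact ⟨h', Or.inr rfl⟩
  · intro u1 h1 u2 h2 he
    by_cases ha : (v, u1) ∈ E <;> by_cases hb : (v, u2) ∈ E <;>
      simp only [if_pos, if_neg, ha, hb, ite_true, ite_false] at he
    · exact (Prod.mk.injEq _ _ _ _ ▸ he).2
    · have := Prod.mk.injEq _ _ _ _ ▸ he
      exact this.2.trans this.1
    · have := Prod.mk.injEq _ _ _ _ ▸ he
      exact this.1.trans this.2
    · exact (Prod.mk.injEq _ _ _ _ ▸ he).1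

theorem vizing_coloring (Δ : ℕ) (E : Finset (V × V))
    (hs : ∀ e ∈ E, e.1 ≠ e.2) (hn : ∀ e ∈ E, (e.2, e.1) ∉ E)
    (hdeg : ∀ v : V, (E.filter (fun e => e.1 = v ∨ e.2 = v)).card ≤ Δ) :
    ∃ c : V → V → Option (Fin (Δ + 1)),
      IsPC (adjOf E) c ∧ ∀ u v, adjOf E u v → (c u v).isSome := by
  classical
  induction E using Finset.strongInduction with
  | _ E ih =>
    rcases Finset.eq_empty_or_nonempty E with rfl | ⟨e, he⟩
    · refine ⟨fun _ _ => none, ⟨fun _ _ => rfl, fun u v h => by simp at h, fun v u w k h _ => by simp at h⟩, ?_⟩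
      intro u v h
      rcases h with h | h <;> simp at h
    · set E' := E.erase e with hE'
      have hsub : E' ⊆ E := Finset.erase_subset e E
      have hlt : E' ⊂ E := Finset.erase_ssubset he
      obtain ⟨c, hc, hfull⟩ := ih E' hlt
        (fun f hf => hs f (hsub hf)) (fun f hf hrev => hn f (hsub hf) (hsub hrev))
        (fun v => le_trans (Finset.card_le_card (Finset.filter_subset_filter _ hsub)) (hdeg v))
      have hadj_mono : ∀ u v, adjOf E' u v → adjOf E u v := by
        intro u v h
        rcases h with h | h
        · exact Or.inl (hsub h)
        · exact Or.inr (hsub h)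
      have hcE : IsPC (adjOf E) c :=
        ⟨hc.symm, fun u v h => hadj_mono u v (hc.dom u v h), hc.proper⟩
      have he12 : e.1 ≠ e.2 := hs e he
      have hadj_e : adjOf E e.1 e.2 := Or.inl (by rw [← Prod.mk.eta (p := e)] at he; exact he)
      have hms : MS (adjOf E) c e.1 e.2 := by
        constructor
        · cases h : c e.1 e.2 with
          | none => rfl
          | some k =>
              exfalso
              have := hc.dom e.1 e.2 (by rw [h]; rfl)
              rcases this with h' | h'
              · rw [hE'] at h'
                have := Finset.mem_erase.1 h'
                exact this.1 (by rw [Prod.mk.eta])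
              · exact hn e he (by rw [hE'] at h'; exact hsub h')
        · intro u v hadjuv hnp
          apply hfull
          rcases hadjuv with h | h
          · left
            rw [hE', Finset.mem_erase]
            refine ⟨?_, h⟩
            intro hh
            apply hnp
            left
            constructor
            · exact congrArg Prod.fst hh
            · exact congrArg Prod.snd hh
          · right
            rw [hE', Finset.mem_erase]
            refine ⟨?_, h⟩
            intro hh
            apply hnp
            right
            constructor
            · exact congrArg Prod.snd hh
            · exact congrArg Prod.fst hh
      exact extend_coloring (adjOf_symm E) (adjOf_irr hs) (adjOf_deg hs hdeg)
        e.1 e.2 hadj_e c hcE hms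

end Outer


section Application

open scoped BigOperators

variable {V S : Type*} [Fintype V] [DecidableEq V] [Fintype S] [Nonempty S]

theorem psiL_nonneg (ψ : V × V → S → S → ℝ) (hψ : ∀ e a b, 0 ≤ ψ e a b) (e : V × V) :
    0 ≤ psiL ψ e :=
  le_ciInf (fun p => hψ e p.1 p.2)

theorem mrfZ_pos (E : Finset (V × V)) (φ : V → S → ℝ) (ψ : V × V → S → S → ℝ) :
    0 < mrfZ E φ ψ := by
  haveI : Nonempty (V → S) := ⟨fun _ => Classical.arbitrary S⟩
  exact Finset.sum_pos (fun x _ => Real.exp_pos _) Finset.univ_nonempty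

theorem energy_le_logZ (E : Finset (V × V)) (φ : V → S → ℝ) (ψ : V × V → S → S → ℝ)
    (x : V → S) : mrfEnergy E φ ψ x ≤ Real.log (mrfZ E φ ψ) := by
  rw [Real.le_log_iff_exp_le (mrfZ_pos E φ ψ)]
  exact Finset.single_le_sum (f := fun y => Real.exp (mrfEnergy E φ ψ y))
    (fun y _ => (Real.exp_pos _).le) (Finset.mem_univ x)

theorem logZ_nonneg (E : Finset (V × V)) (φ : V → S → ℝ) (ψ : V × V → S → S → ℝ)
    (hφ : ∀ v s, 0 ≤ φ v s) (hψ : ∀ e a b, 0 ≤ ψ e a b) :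
    0 ≤ Real.log (mrfZ E φ ψ) := by
  have x : V → S := fun _ => Classical.arbitrary S
  refine le_trans ?_ (energy_le_logZ E φ ψ x)
  unfold mrfEnergy
  have h1 : (0:ℝ) ≤ ∑ v, φ v (x v) := Finset.sum_nonneg (fun v _ => hφ v (x v))
  have h2 : (0:ℝ) ≤ ∑ e ∈ E, ψ e (x e.1) (x e.2) :=
    Finset.sum_nonneg (fun e _ => hψ e _ _)
  linarith

/-- Simultaneously optimizing all edges of a matching inside `E`. -/
theorem matching_le_logZ (E : Finset (V × V)) (φ : V → S → ℝ) (ψ : V × V → S → S → ℝ)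
    (hφ : ∀ v s, 0 ≤ φ v s) (hψ : ∀ e a b, 0 ≤ ψ e a b)
    (hsimple : ∀ e ∈ E, e.1 ≠ e.2)
    (M : Finset (V × V)) (hME : M ⊆ E)
    (hmatch : ∀ e ∈ M, ∀ f ∈ M,
      (e.1 = f.1 ∨ e.1 = f.2 ∨ e.2 = f.1 ∨ e.2 = f.2) → e = f) :
    ∑ e ∈ M, psiU ψ e ≤ Real.log (mrfZ E φ ψ) := by
  classical
  have hpick : ∀ e : V × V, ∃ p : S × S, ∀ q : S × S, ψ e q.1 q.2 ≤ ψ e p.1 p.2 := by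
    intro e
    obtain ⟨p, hp⟩ := Finite.exists_max (fun p : S × S => ψ e p.1 p.2)
    exact ⟨p, hp⟩
  choose pk hpk using hpick
  set xcfg : V → S := fun v =>
    if h1 : ∃ e, e ∈ M ∧ e.1 = v then (pk h1.choose).1
    else if h2 : ∃ e, e ∈ M ∧ e.2 = v then (pk h2.choose).2
    else Classical.arbitrary S with hxcfg
  have hval : ∀ e ∈ M, xcfg e.1 = (pk e).1 ∧ xcfg e.2 = (pk e).2 := by
    intro e he
    constructor
    · have h1 : ∃ f, f ∈ M ∧ f.1 = e.1 := ⟨e, he, rfl⟩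
      rw [hxcfg]
      simp only [dif_pos h1]
      have hspec := h1.choose_spec
      have heq : h1.choose = e := hmatch _ hspec.1 e he (Or.inl hspec.2)
      rw [heq]
    · have h1 : ¬ ∃ f, f ∈ M ∧ f.1 = e.2 := by
        rintro ⟨f, hf, hfe⟩
        have heq : e = f := hmatch e he f hf (Or.inr (Or.inr (Or.inl hfe.symm)))
        exact hsimple e (hME he) ((congrArg Prod.fst heq).trans hfe)
      have h2 : ∃ f, f ∈ M ∧ f.2 = e.2 := ⟨e, he, rfl⟩
      rw [hxcfg]
      simp only [dif_neg h1, dif_pos h2]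
      have hspec := h2.choose_spec
      have heq : h2.choose = e := hmatch _ hspec.1 e he (Or.inr (Or.inr (Or.inr hspec.2)))
      rw [heq]
  have hsum1 : ∑ e ∈ M, psiU ψ e ≤ ∑ e ∈ M, ψ e (xcfg e.1) (xcfg e.2) := by
    apply Finset.sum_le_sum
    intro e he
    rw [(hval e he).1, (hval e he).2]
    exact ciSup_le (hpk e)
  have hsum2 : ∑ e ∈ M, ψ e (xcfg e.1) (xcfg e.2) ≤ ∑ e ∈ E, ψ e (xcfg e.1) (xcfg e.2) :=
    Finset.sum_le_sum_of_subset_of_nonneg hME (fun e _ _ => hψ e _ _)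
  have hsum3 : ∑ e ∈ E, ψ e (xcfg e.1) (xcfg e.2) ≤ mrfEnergy E φ ψ xcfg := by
    unfold mrfEnergy
    have : (0:ℝ) ≤ ∑ v, φ v (xcfg v) := Finset.sum_nonneg (fun v _ => hφ v _)
    linarith
  exact le_trans hsum1 (le_trans hsum2 (le_trans hsum3 (energy_le_logZ E φ ψ xcfg)))

/-- The key combinatorial bound : `∑ gaps ≤ (Δ+1) log Z`. -/
theorem sum_gap_le (E : Finset (V × V)) (φ : V → S → ℝ) (ψ : V × V → S → S → ℝ)
    (hφ : ∀ v s, 0 ≤ φ v s) (hψ : ∀ e a b, 0 ≤ ψ e a b)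
    (hsimple : ∀ e ∈ E, e.1 ≠ e.2) (hnodup : ∀ e ∈ E, (e.2, e.1) ∉ E)
    (Δ : ℕ) (hdeg : ∀ v : V, (E.filter (fun e => e.1 = v ∨ e.2 = v)).card ≤ Δ) :
    ∑ e ∈ E, (psiU ψ e - psiL ψ e) ≤ ((Δ : ℝ) + 1) * Real.log (mrfZ E φ ψ) := by
  classical
  obtain ⟨c, hc, hfull⟩ := vizing_coloring Δ E hsimple hnodup hdeg
  set col : V × V → Fin (Δ + 1) := fun e => (c e.1 e.2).getD ⟨0, Nat.succ_pos Δ⟩ with hcol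
  have hcolE : ∀ e ∈ E, c e.1 e.2 = some (col e) := by
    intro e he
    have := hfull e.1 e.2 (Or.inl (by rwa [Prod.mk.eta]))
    cases hce : c e.1 e.2 with
    | none => rw [hce] at this; simp at this
    | some k => simp only [hcol, hce, Option.getD_some]
  -- each color class is a matching
  have hmatchk : ∀ k : Fin (Δ + 1), ∀ e ∈ E.filter (fun e => col e = k),
      ∀ f ∈ E.filter (fun e => col e = k),
      (e.1 = f.1 ∨ e.1 = f.2 ∨ e.2 = f.1 ∨ e.2 = f.2) → e = f := by
    intro k e he f hf hshare
    rw [Finset.mem_filter] at he hf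
    have hce : c e.1 e.2 = some k := by rw [hcolE e he.1, he.2]
    have hcf : c f.1 f.2 = some k := by rw [hcolE f hf.1, hf.2]
    rcases hshare with h | h | h | h
    · -- e.1 = f.1
      have : e.2 = f.2 := hc.proper e.1 e.2 f.2 k hce (by rw [h]; exact hcf)
      exact Prod.ext h this
    · -- e.1 = f.2 : e = (a,b), f = (c,a) ; proper at a : c a b = k and c a c' = k
      exfalso
      have h1 : c e.1 f.1 = some k := by
        rw [hc.symm e.1 f.1, h]
        exact hcf
      have : e.2 = f.1 := hc.proper e.1 e.2 f.1 k hce h1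
      -- then f = (e.2, e.1): contradiction with hnodup
      apply hnodup e he.1
      have hf' : f = (e.2, e.1) := Prod.ext this.symm h.symm
      rw [← hf']
      exact hf.1
    · -- e.2 = f.1
      exfalso
      have h1 : c e.2 e.1 = some k := by rw [hc.symm]; exact hce
      have h2 : c e.2 f.2 = some k := by rw [h]; exact hcf
      have : e.1 = f.2 := hc.proper e.2 e.1 f.2 k h1 h2
      apply hnodup e he.1
      have hf' : f = (e.2, e.1) := Prod.ext h.symm this.symm
      rw [← hf']
      exact hf.1
    · -- e.2 = f.2
      have h1 : c e.2 e.1 = some k := by rw [hc.symm]; exact hce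
      have h2 : c e.2 f.1 = some k := by rw [h, hc.symm]; exact hcf
      have : e.1 = f.1 := hc.proper e.2 e.1 f.1 k h1 h2
      exact Prod.ext this h
  -- partition the sum by color
  have hpart : ∑ e ∈ E, (psiU ψ e - psiL ψ e) =
      ∑ k : Fin (Δ + 1), ∑ e ∈ E.filter (fun e => col e = k), (psiU ψ e - psiL ψ e) :=
    (Finset.sum_fiberwise E col (fun e => psiU ψ e - psiL ψ e)).symm
  rw [hpart]
  have hbound : ∀ k : Fin (Δ + 1),
      ∑ e ∈ E.filter (fun e => col e = k), (psiU ψ e - psiL ψ e) ≤ Real.log (mrfZ E φ ψ) := by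
    intro k
    have h1 : ∑ e ∈ E.filter (fun e => col e = k), (psiU ψ e - psiL ψ e) ≤
        ∑ e ∈ E.filter (fun e => col e = k), psiU ψ e := by
      apply Finset.sum_le_sum
      intro e he
      have := psiL_nonneg ψ hψ e
      linarith
    refine le_trans h1 ?_
    exact matching_le_logZ E φ ψ hφ hψ hsimple _ (Finset.filter_subset _ _) (hmatchk k)
  calc ∑ k : Fin (Δ + 1), ∑ e ∈ E.filter (fun e => col e = k), (psiU ψ e - psiL ψ e)
      ≤ ∑ _k : Fin (Δ + 1), Real.log (mrfZ E φ ψ) := Finset.sum_le_sum (fun k _ => hbound k)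
    _ = ((Δ : ℝ) + 1) * Real.log (mrfZ E φ ψ) := by
        rw [Finset.sum_const, Finset.card_univ, Fintype.card_fin]
        push_cast
        ring

end Application


theorem psiL_le_psiU' {V S : Type*} [Fintype S] [Nonempty S]
    (ψ : V × V → S → S → ℝ) (e : V × V) : psiL ψ e ≤ psiU ψ e := by
  have p : S × S := Classical.arbitrary _
  unfold psiL psiU
  exact le_trans (ciInf_le (Finite.bddBelow_range fun q : S × S => ψ e q.1 q.2) p)
    (le_ciSup (Finite.bddAbove_range fun q : S × S => ψ e q.1 q.2) p)


/-- Let `B` be a random edge subset of `E` (distribution `p`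
over `Finset (V × V)`) with per-edge inclusion probability at most `ε`. For the
bounds `log Ẑ_LB(b) = log Z(E \ b) + ∑_{e∈b} ψ_e^L` and
`log Ẑ_UB(b) = log Z(E \ b) + ∑_{e∈b} ψ_e^U` (note `log Z(E\b) = ∑_j log Z_j`,
the sum of componentwise log-partition functions), the expected gap satisfies
`E[log Ẑ_UB − log Ẑ_LB] ≤ ε (dstar+1) log Z`. -/
theorem expected_gap_le {V S : Type*} [Fintype V] [DecidableEq V]
    [Fintype S] [Nonempty S]
    (E : Finset (V × V))
    (hsimple : ∀ e ∈ E, e.1 ≠ e.2)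
    (hnodup : ∀ e ∈ E, (e.2, e.1) ∉ E)
    (φ : V → S → ℝ) (ψ : V × V → S → S → ℝ)
    (hφ : ∀ v s, 0 ≤ φ v s) (hψ : ∀ e a b, 0 ≤ ψ e a b)
    (dstar : ℕ)
    (hdeg : ∀ v : V, (E.filter (fun e => e.1 = v ∨ e.2 = v)).card ≤ dstar)
    (ε : ℝ) (hε : 0 ≤ ε)
    (p : Finset (V × V) → ℝ)
    (hp0 : ∀ b, 0 ≤ p b) (hp1 : ∑ b : Finset (V × V), p b = 1)
    (hsupp : ∀ b, p b ≠ 0 → b ⊆ E)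
    (hmarg : ∀ e ∈ E,
      ∑ b ∈ Finset.univ.filter (fun b : Finset (V × V) => e ∈ b), p b ≤ ε) :
    ∑ b : Finset (V × V), p b *
        ((Real.log (mrfZ (E \ b) φ ψ) + ∑ e ∈ b, psiU ψ e) -
          (Real.log (mrfZ (E \ b) φ ψ) + ∑ e ∈ b, psiL ψ e))
      ≤ ε * ((dstar : ℝ) + 1) * Real.log (mrfZ E φ ψ) := by
    classical
  set g : V × V → ℝ := fun e => psiU ψ e - psiL ψ e with hg
  have hg0 : ∀ e, 0 ≤ g e := by
    intro e
    have := psiL_le_psiU' ψ e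
    simp only [hg]
    linarith
  -- simplify the summand
  have hsummand : ∀ b : Finset (V × V),
      (Real.log (mrfZ (E \ b) φ ψ) + ∑ e ∈ b, psiU ψ e) -
        (Real.log (mrfZ (E \ b) φ ψ) + ∑ e ∈ b, psiL ψ e) = ∑ e ∈ b, g e := by
    intro b
    rw [add_sub_add_left_eq_sub, ← Finset.sum_sub_distrib]
  have hstep1 : ∑ b : Finset (V × V), p b *
      ((Real.log (mrfZ (E \ b) φ ψ) + ∑ e ∈ b, psiU ψ e) -
        (Real.log (mrfZ (E \ b) φ ψ) + ∑ e ∈ b, psiL ψ e)) =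
      ∑ b : Finset (V × V), p b * ∑ e ∈ b, g e := by
    apply Finset.sum_congr rfl
    intro b _
    rw [hsummand b]
  rw [hstep1]
  -- swap sums
  have hswap : ∑ b : Finset (V × V), p b * ∑ e ∈ b, g e =
      ∑ e : V × V, g e * ∑ b ∈ Finset.univ.filter (fun b : Finset (V × V) => e ∈ b), p b := by
    have h1 : ∀ b : Finset (V × V), p b * ∑ e ∈ b, g e =
        ∑ e : V × V, (if e ∈ b then p b * g e else 0) := by
      intro b
      rw [← Finset.sum_filter]
      rw [Finset.filter_mem_eq_inter, Finset.univ_inter, Finset.mul_sum]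
    rw [Finset.sum_congr rfl (fun b _ => h1 b), Finset.sum_comm]
    apply Finset.sum_congr rfl
    intro e _
    rw [← Finset.sum_filter, mul_comm, Finset.sum_mul]
  rw [hswap]
  -- restrict to E
  have hrestrict : ∑ e : V × V, g e * ∑ b ∈ Finset.univ.filter (fun b : Finset (V × V) => e ∈ b), p b
      = ∑ e ∈ E, g e * ∑ b ∈ Finset.univ.filter (fun b : Finset (V × V) => e ∈ b), p b := by
    symm
    apply Finset.sum_subset (Finset.subset_univ E)
    intro e _ heE
    have hPzero : ∑ b ∈ Finset.univ.filter (fun b : Finset (V × V) => e ∈ b), p b = 0 := by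
      apply Finset.sum_eq_zero
      intro b hb
      rw [Finset.mem_filter] at hb
      by_contra hpb
      exact heE (hsupp b hpb hb.2)
    rw [hPzero, mul_zero]
  rw [hrestrict]
  -- bound
  have hbound1 : ∑ e ∈ E, g e * ∑ b ∈ Finset.univ.filter (fun b : Finset (V × V) => e ∈ b), p b
      ≤ ∑ e ∈ E, g e * ε := by
    apply Finset.sum_le_sum
    intro e he
    exact mul_le_mul_of_nonneg_left (hmarg e he) (hg0 e)
  have hbound2 : ∑ e ∈ E, g e * ε = ε * ∑ e ∈ E, g e := by
    rw [← Finset.sum_mul, mul_comm]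
  refine le_trans hbound1 ?_
  rw [hbound2]
  have hfinal := sum_gap_le E φ ψ hφ hψ hsimple hnodup dstar hdeg
  calc ε * ∑ e ∈ E, g e
      ≤ ε * (((dstar : ℝ) + 1) * Real.log (mrfZ E φ ψ)) :=
        mul_le_mul_of_nonneg_left hfinal hε
    _ = ε * ((dstar : ℝ) + 1) * Real.log (mrfZ E φ ψ) := by ring
end

section
/- Let G = (V, E) be a finite simple graph with max degree d*, and let B be a random subset of E with Pr(e ∈ B) ≤ ε for each edge e. Let x* be a MAP assignment with energy H(x*), and x̂ the assignment formed from componentwise MAP solutions of (V, E \ B). Then E[H(x*) − H(x̂)] ≤ ε (d*+1) H(x*). -/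
open scoped BigOperators

/-- Let `B` be a random edge subset of `E` with per-edge
inclusion probability at most `ε`. If `x*` maximizes the energy `H` and, for
each realization `b`, `xhat b` maximizes the energy of the decomposed graph
`(V, E \ b)` (equivalently, it glues componentwise MAP solutions), then
`E[H(x*) − H(x̂)] ≤ ε (dstar+1) H(x*)`. -/
theorem expected_map_gap_le {V S : Type*} [Fintype V] [DecidableEq V]
    [Fintype S] [Nonempty S]
    (E : Finset (V × V))
    (hsimple : ∀ e ∈ E, e.1 ≠ e.2)
    (hnodup : ∀ e ∈ E, (e.2, e.1) ∉ E)
    (φ : V → S → ℝ) (ψ : V × V → S → S → ℝ)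
    (hφ : ∀ v s, 0 ≤ φ v s) (hψ : ∀ e a b, 0 ≤ ψ e a b)
    (dstar : ℕ)
    (hdeg : ∀ v : V, (E.filter (fun e => e.1 = v ∨ e.2 = v)).card ≤ dstar)
    (ε : ℝ) (hε : 0 ≤ ε)
    (p : Finset (V × V) → ℝ)
    (hp0 : ∀ b, 0 ≤ p b) (hp1 : ∑ b : Finset (V × V), p b = 1)
    (hsupp : ∀ b, p b ≠ 0 → b ⊆ E)
    (hmarg : ∀ e ∈ E,
      ∑ b ∈ Finset.univ.filter (fun b : Finset (V × V) => e ∈ b), p b ≤ ε)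
    (xstar : V → S)
    (hstar : ∀ x : V → S, mrfEnergy E φ ψ x ≤ mrfEnergy E φ ψ xstar)
    (xhat : Finset (V × V) → V → S)
    (hhat : ∀ b, ∀ y : V → S,
      mrfEnergy (E \ b) φ ψ y ≤ mrfEnergy (E \ b) φ ψ (xhat b)) :
    ∑ b : Finset (V × V),
        p b * (mrfEnergy E φ ψ xstar - mrfEnergy E φ ψ (xhat b))
      ≤ ε * ((dstar : ℝ) + 1) * mrfEnergy E φ ψ xstar := by
  have hH0 : 0 ≤ mrfEnergy E φ ψ xstar := by
    unfold mrfEnergy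
    exact add_nonneg (Finset.sum_nonneg fun v _ => hφ v _)
      (Finset.sum_nonneg fun e _ => hψ e _ _)
  have hedge : ∑ e ∈ E, ψ e (xstar e.1) (xstar e.2) ≤ mrfEnergy E φ ψ xstar := by
    unfold mrfEnergy
    have := Finset.sum_nonneg fun (v : V) (_ : v ∈ Finset.univ) => hφ v (xstar v)
    linarith
  -- per-realization bound
  have key : ∀ b : Finset (V × V),
      p b * (mrfEnergy E φ ψ xstar - mrfEnergy E φ ψ (xhat b))
        ≤ ∑ e ∈ E, (if e ∈ b then p b * ψ e (xstar e.1) (xstar e.2) else 0) := by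
    intro b
    by_cases hpb : p b = 0
    · simp [hpb]
    have hb : b ⊆ E := hsupp b hpb
    have hsplit : ∀ x : V → S, mrfEnergy E φ ψ x
        = mrfEnergy (E \ b) φ ψ x + ∑ e ∈ b, ψ e (x e.1) (x e.2) := by
      intro x
      unfold mrfEnergy
      rw [add_assoc]
      congr 1
      rw [Finset.sum_sdiff hb]
    have hRHS : ∑ e ∈ E, (if e ∈ b then p b * ψ e (xstar e.1) (xstar e.2) else 0)
        = p b * ∑ e ∈ b, ψ e (xstar e.1) (xstar e.2) := by
      rw [← Finset.sum_filter]
      have hfe : E.filter (fun e => e ∈ b) = b := by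
        ext e
        simp only [Finset.mem_filter]
        exact ⟨fun h => h.2, fun h => ⟨hb h, h⟩⟩
      rw [hfe, Finset.mul_sum]
    rw [hRHS]
    have h1 := hhat b xstar
    have h2 : 0 ≤ ∑ e ∈ b, ψ e ((xhat b) e.1) ((xhat b) e.2) :=
      Finset.sum_nonneg fun e _ => hψ _ _ _
    have hgap : mrfEnergy E φ ψ xstar - mrfEnergy E φ ψ (xhat b)
        ≤ ∑ e ∈ b, ψ e (xstar e.1) (xstar e.2) := by
      rw [hsplit xstar, hsplit (xhat b)]
      linarith
    exact mul_le_mul_of_nonneg_left hgap (hp0 b)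
  calc ∑ b : Finset (V × V),
          p b * (mrfEnergy E φ ψ xstar - mrfEnergy E φ ψ (xhat b))
      ≤ ∑ b : Finset (V × V), ∑ e ∈ E,
          (if e ∈ b then p b * ψ e (xstar e.1) (xstar e.2) else 0) :=
        Finset.sum_le_sum fun b _ => key b
    _ = ∑ e ∈ E, ∑ b : Finset (V × V),
          (if e ∈ b then p b * ψ e (xstar e.1) (xstar e.2) else 0) :=
        Finset.sum_comm
    _ ≤ ∑ e ∈ E, ε * ψ e (xstar e.1) (xstar e.2) := by
        apply Finset.sum_le_sum
        intro e he
        have : ∑ b : Finset (V × V),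
            (if e ∈ b then p b * ψ e (xstar e.1) (xstar e.2) else 0)
            = (∑ b ∈ Finset.univ.filter (fun b : Finset (V × V) => e ∈ b), p b)
              * ψ e (xstar e.1) (xstar e.2) := by
          rw [← Finset.sum_filter, Finset.sum_mul]
        rw [this]
        exact mul_le_mul_of_nonneg_right (hmarg e he) (hψ e _ _)
    _ = ε * ∑ e ∈ E, ψ e (xstar e.1) (xstar e.2) := by rw [Finset.mul_sum]
    _ ≤ ε * mrfEnergy E φ ψ xstar := mul_le_mul_of_nonneg_left hedge hε
    _ ≤ ε * ((dstar : ℝ) + 1) * mrfEnergy E φ ψ xstar := by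
        have hd : (0 : ℝ) ≤ (dstar : ℝ) := Nat.cast_nonneg _
        nlinarith [mul_nonneg (mul_nonneg hε hd) hH0]
end

section
/- For the regular pairwise binary MRF on the d-dimensional grid ℤ_n^d with identical nonnegative node potential φ and edge potential ψ, the normalized log-partition function converges: lim_{n→∞} (1/n^d) log Z_n exists and lies in (0, ∞). -/
open scoped Classical in
/-- Edge set of the `d`-dimensional grid graph `ℤ_n^d` on vertex set
`Fin d → Fin n` (each edge listed once: pairs differing by `+1` in exactly one
coordinate). -/
noncomputable def gridEdgesD (d n : ℕ) :
    Finset ((Fin d → Fin n) × (Fin d → Fin n)) :=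
  Finset.univ.filter (fun e =>
    ∃ i : Fin d, ((e.1 i : ℕ) + 1 = (e.2 i : ℕ)) ∧ ∀ j : Fin d, j ≠ i → e.1 j = e.2 j)

/-- Partition function of the regular binary MRF on `ℤ_n^d` with identical node
potential `φ` and edge potential `ψ`. -/
noncomputable def gridZD (d n : ℕ) (φ : Bool → ℝ) (ψ : Bool → Bool → ℝ) : ℝ :=
  ∑ x : (Fin d → Fin n) → Bool,
    Real.exp (∑ v, φ (x v) + ∑ e ∈ gridEdgesD d n, ψ (x e.1) (x e.2))

section Aux

open Finset Filter

/-- Sum of a nonnegative function over the image of an injection is at most the sum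
over any superset of the image. -/
private lemma sum_comp_le' {A B : Type*} [DecidableEq B] (s : Finset A) (t : Finset B)
    (g : A → B) (hg : Set.InjOn g s) (hmem : ∀ a ∈ s, g a ∈ t) (f : B → ℝ)
    (hf : ∀ b ∈ t, 0 ≤ f b) : ∑ a ∈ s, f (g a) ≤ ∑ b ∈ t, f b := by
  rw [← Finset.sum_image (fun x hx y hy h => hg hx hy h)]
  refine Finset.sum_le_sum_of_subset_of_nonneg ?_ (fun b hb _ => hf b hb)
  intro b hb
  rcases Finset.mem_image.1 hb with ⟨a, ha, rfl⟩
  exact hmem a ha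

private lemma gridZD_pos (d n : ℕ) (φ : Bool → ℝ) (ψ : Bool → Bool → ℝ)
    (hφ : ∀ s, 0 ≤ φ s) (hψ : ∀ a b, 0 ≤ ψ a b) :
    (2:ℝ) ^ (n ^ d) ≤ gridZD d n φ ψ := by
  classical
  have hcard : Fintype.card ((Fin d → Fin n) → Bool) = 2 ^ (n ^ d) := by
    simp [Fintype.card_fun]
  calc (2:ℝ) ^ (n ^ d) = ∑ _x : (Fin d → Fin n) → Bool, (1:ℝ) := by
        rw [Finset.sum_const, Finset.card_univ, hcard]; simp
    _ ≤ gridZD d n φ ψ := by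
        refine Finset.sum_le_sum fun x _ => ?_
        rw [show (1:ℝ) = Real.exp 0 from Real.exp_zero.symm]
        refine Real.exp_le_exp.2 ?_
        exact add_nonneg (Finset.sum_nonneg fun v _ => hφ _)
          (Finset.sum_nonneg fun e _ => hψ _ _)

private lemma card_gridEdgesD_le (d n : ℕ) (hd : 1 ≤ d) :
    (gridEdgesD d n).card ≤ d * n ^ d := by
  classical
  have hne : Nonempty (Fin d) := ⟨⟨0, hd⟩⟩
  have key : (gridEdgesD d n).card ≤
      (Finset.univ : Finset (Fin d × (Fin d → Fin n))).card := by
    refine Finset.card_le_card_of_injOn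
      (fun e => ((if h : ∃ i : Fin d, ((e.1 i : ℕ) + 1 = (e.2 i : ℕ)) ∧
          ∀ j : Fin d, j ≠ i → e.1 j = e.2 j then h.choose else Classical.arbitrary _), e.1))
      (fun _ _ => Finset.mem_univ _) ?_
    intro e he e' he' h
    have heP : ∃ i : Fin d, ((e.1 i : ℕ) + 1 = (e.2 i : ℕ)) ∧
        ∀ j : Fin d, j ≠ i → e.1 j = e.2 j := by
      simpa [gridEdgesD] using he
    have heP' : ∃ i : Fin d, ((e'.1 i : ℕ) + 1 = (e'.2 i : ℕ)) ∧
        ∀ j : Fin d, j ≠ i → e'.1 j = e'.2 j := by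
      simpa [gridEdgesD] using he'
    simp only at h
    rw [dif_pos heP, dif_pos heP'] at h
    have h1 : e.1 = e'.1 := congrArg Prod.snd h
    have hi : heP.choose = heP'.choose := congrArg Prod.fst h
    have hs := heP.choose_spec
    have hs' := heP'.choose_spec
    have h2 : e.2 = e'.2 := by
      funext j
      by_cases hj : j = heP.choose
      · subst hj
        apply Fin.ext
        have := hs.1
        have := hs'.1
        rw [← hi] at hs'
        have h3 := hs'.1
        have h4 := congrFun h1 heP.choose
        have h5 : ((e.1 heP.choose : ℕ)) = ((e'.1 heP.choose : ℕ)) := by rw [h4]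
        omega
      · have := hs.2 j hj
        rw [← hi] at hs'
        have := hs'.2 j hj
        calc e.2 j = e.1 j := (hs.2 j hj).symm
          _ = e'.1 j := congrFun h1 j
          _ = e'.2 j := hs'.2 j hj
    exact Prod.ext h1 h2
  simpa [Fintype.card_fun] using key

private lemma gridZD_le (d n : ℕ) (hd : 1 ≤ d) (φ : Bool → ℝ) (ψ : Bool → Bool → ℝ)
    (hφ : ∀ s, 0 ≤ φ s) (hψ : ∀ a b, 0 ≤ ψ a b) :
    gridZD d n φ ψ ≤ (2:ℝ) ^ (n ^ d) *
      Real.exp ((n:ℝ) ^ d * ((φ true + φ false) +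
        d * (ψ true true + ψ true false + ψ false true + ψ false false))) := by
  classical
  set P : ℝ := φ true + φ false with hP
  set Q : ℝ := ψ true true + ψ true false + ψ false true + ψ false false with hQ
  have hP0 : 0 ≤ P := add_nonneg (hφ _) (hφ _)
  have hQ0 : 0 ≤ Q := by
    have := hψ true true; have := hψ true false; have := hψ false true
    have := hψ false false
    rw [hQ]; linarith
  have hφP : ∀ s, φ s ≤ P := by
    intro s; have := hφ true; have := hφ false; cases s <;> (rw [hP]; linarith)
  have hψQ : ∀ a b, ψ a b ≤ Q := by
    intro a b
    have := hψ true true; have := hψ true false; have := hψ false true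
    have := hψ false false
    cases a <;> cases b <;> (rw [hQ]; linarith)
  have hEbound : ∀ x : (Fin d → Fin n) → Bool,
      ∑ v, φ (x v) + ∑ e ∈ gridEdgesD d n, ψ (x e.1) (x e.2)
        ≤ (n:ℝ) ^ d * (P + d * Q) := by
    intro x
    have h1 : ∑ v, φ (x v) ≤ (n:ℝ) ^ d * P := by
      calc ∑ v, φ (x v) ≤ ∑ _v : Fin d → Fin n, P :=
            Finset.sum_le_sum fun v _ => hφP _
        _ = (n:ℝ) ^ d * P := by
            rw [Finset.sum_const, Finset.card_univ]
            simp [Fintype.card_fun, nsmul_eq_mul]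
    have h2 : ∑ e ∈ gridEdgesD d n, ψ (x e.1) (x e.2) ≤ (d : ℝ) * (n:ℝ) ^ d * Q := by
      calc ∑ e ∈ gridEdgesD d n, ψ (x e.1) (x e.2)
          ≤ ∑ _e ∈ gridEdgesD d n, Q := Finset.sum_le_sum fun e _ => hψQ _ _
        _ = ((gridEdgesD d n).card : ℝ) * Q := by rw [Finset.sum_const, nsmul_eq_mul]
        _ ≤ (d : ℝ) * (n:ℝ) ^ d * Q := by
            refine mul_le_mul_of_nonneg_right ?_ hQ0
            have := card_gridEdgesD_le d n hd
            calc ((gridEdgesD d n).card : ℝ) ≤ ((d * n ^ d : ℕ) : ℝ) := by exact_mod_cast this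
              _ = (d : ℝ) * (n:ℝ) ^ d := by push_cast; ring
    calc ∑ v, φ (x v) + ∑ e ∈ gridEdgesD d n, ψ (x e.1) (x e.2)
        ≤ (n:ℝ) ^ d * P + (d : ℝ) * (n:ℝ) ^ d * Q := add_le_add h1 h2
      _ = (n:ℝ) ^ d * (P + d * Q) := by ring
  calc gridZD d n φ ψ
      ≤ ∑ _x : (Fin d → Fin n) → Bool, Real.exp ((n:ℝ) ^ d * (P + d * Q)) :=
        Finset.sum_le_sum fun x _ => Real.exp_le_exp.2 (hEbound x)
    _ = (2:ℝ) ^ (n ^ d) * Real.exp ((n:ℝ) ^ d * (P + d * Q)) := by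
        rw [Finset.sum_const, Finset.card_univ, nsmul_eq_mul]
        congr 1
        simp [Fintype.card_fun]

set_option maxHeartbeats 2000000 in
/-- Superadditivity: splitting `ℤ_n^d` into `q^d` blocks of side `m`. -/
private lemma gridZD_superadd (d : ℕ) (hd : 1 ≤ d) (φ : Bool → ℝ) (ψ : Bool → Bool → ℝ)
    (hφ : ∀ s, 0 ≤ φ s) (hψ : ∀ a b, 0 ≤ ψ a b) (m q n : ℕ) (hm : 1 ≤ m) (hq : 1 ≤ q)
    (hqm : q * m ≤ n) :
    gridZD d m φ ψ ^ (q ^ d) ≤ gridZD d n φ ψ := by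
  classical
  have hmpos : 0 < m := hm
  have hbound : ∀ (b : Fin d → Fin q) (v : Fin d → Fin m) (i : Fin d),
      (b i : ℕ) * m + (v i : ℕ) < q * m := by
    intro b v i
    calc (b i : ℕ) * m + (v i : ℕ) < (b i : ℕ) * m + m :=
          Nat.add_lt_add_left (v i).isLt _
      _ = ((b i : ℕ) + 1) * m := by ring
      _ ≤ q * m := Nat.mul_le_mul_right m (b i).isLt
  set ι : (Fin d → Fin q) → (Fin d → Fin m) → (Fin d → Fin n) :=
    fun b v i => ⟨(b i : ℕ) * m + v i, lt_of_lt_of_le (hbound b v i) hqm⟩ with hιdef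
  have hιval : ∀ b v i, ((ι b v i : ℕ)) = (b i : ℕ) * m + v i := fun b v i => rfl
  have hιinj : ∀ b v b' v', ι b v = ι b' v' → b = b' ∧ v = v' := by
    intro b v b' v' h
    have h' : ∀ i, (b i : ℕ) * m + (v i : ℕ) = (b' i : ℕ) * m + (v' i : ℕ) := by
      intro i
      have h0 := congrFun h i
      have := congrArg Fin.val h0
      simpa [hιval] using this
    have key : ∀ i : Fin d, (b i : ℕ) = (b' i : ℕ) ∧ (v i : ℕ) = (v' i : ℕ) := by
      intro i
      have hv := (v i).isLt; have hv' := (v' i).isLt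
      have h2 := h' i
      rcases Nat.lt_trichotomy (b i : ℕ) (b' i : ℕ) with hc | hc | hc
      · exfalso
        have h3 : ((b i : ℕ) + 1) * m ≤ (b' i : ℕ) * m := Nat.mul_le_mul_right m hc
        rw [add_one_mul] at h3
        generalize hx : (b i : ℕ) * m = x at h2 h3
        generalize hy : (b' i : ℕ) * m = y at h2 h3
        omega
      · refine ⟨hc, ?_⟩
        rw [hc] at h2
        exact Nat.add_left_cancel h2
      · exfalso
        have h3 : ((b' i : ℕ) + 1) * m ≤ (b i : ℕ) * m := Nat.mul_le_mul_right m hc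
        rw [add_one_mul] at h3
        generalize hx : (b i : ℕ) * m = x at h2 h3
        generalize hy : (b' i : ℕ) * m = y at h2 h3
        omega
    exact ⟨funext fun i => Fin.ext (key i).1, funext fun i => Fin.ext (key i).2⟩
  set Φ : ((Fin d → Fin q) → (Fin d → Fin m) → Bool) → ((Fin d → Fin n) → Bool) :=
    fun y w => if h : ∀ i, (w i : ℕ) < q * m
      then y (fun i => ⟨(w i : ℕ) / m, Nat.div_lt_of_lt_mul (lt_of_lt_of_eq (h i) (mul_comm q m))⟩)
           (fun i => ⟨(w i : ℕ) % m, Nat.mod_lt _ hmpos⟩)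
      else false with hΦdef
  have hΦι : ∀ y b v, Φ y (ι b v) = y b v := by
    intro y b v
    have hall : ∀ i, ((ι b v i : ℕ)) < q * m := fun i => by
      rw [hιval]; exact hbound b v i
    rw [hΦdef]
    simp only
    rw [dif_pos hall]
    congr 1
    · funext i
      apply Fin.ext
      show ((ι b v i : ℕ)) / m = (b i : ℕ)
      rw [hιval, mul_comm, Nat.mul_add_div hmpos, Nat.div_eq_of_lt (v i).isLt, add_zero]
    · funext i
      apply Fin.ext
      show ((ι b v i : ℕ)) % m = (v i : ℕ)
      rw [hιval, mul_comm, Nat.mul_add_mod, Nat.mod_eq_of_lt (v i).isLt]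
  have hΦinj : Function.Injective Φ := by
    intro y y' h
    funext b v
    have h0 := congrFun h (ι b v)
    rwa [hΦι, hΦι] at h0
  -- energy inequality
  have hE : ∀ y : (Fin d → Fin q) → (Fin d → Fin m) → Bool,
      (∑ b, (∑ v, φ (y b v) + ∑ e ∈ gridEdgesD d m, ψ (y b e.1) (y b e.2)))
        ≤ ∑ w, φ (Φ y w) + ∑ e ∈ gridEdgesD d n, ψ (Φ y e.1) (Φ y e.2) := by
    intro y
    rw [Finset.sum_add_distrib]
    refine add_le_add ?_ ?_
    · -- vertex part
      have h1 : ∑ b, ∑ v, φ (y b v)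
          = ∑ p : (Fin d → Fin q) × (Fin d → Fin m), φ (Φ y (ι p.1 p.2)) := by
        rw [Fintype.sum_prod_type]
        exact Finset.sum_congr rfl fun b _ => Finset.sum_congr rfl fun v _ => by
          rw [hΦι]
      rw [h1]
      refine sum_comp_le' (Finset.univ : Finset ((Fin d → Fin q) × (Fin d → Fin m)))
        Finset.univ (fun p => ι p.1 p.2) ?_
        (fun _ _ => Finset.mem_univ _) (fun w => φ (Φ y w)) (fun _ _ => hφ _)
      intro p _ p' _ hpp
      obtain ⟨h1', h2'⟩ := hιinj _ _ _ _ hpp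
      exact Prod.ext h1' h2'
    · -- edge part
      have h1 : ∑ b, ∑ e ∈ gridEdgesD d m, ψ (y b e.1) (y b e.2)
          = ∑ p ∈ (Finset.univ : Finset (Fin d → Fin q)) ×ˢ gridEdgesD d m,
              ψ (Φ y (ι p.1 p.2.1)) (Φ y (ι p.1 p.2.2)) := by
        rw [Finset.sum_product]
        exact Finset.sum_congr rfl fun b _ => Finset.sum_congr rfl fun e _ => by
          rw [hΦι, hΦι]
      rw [h1]
      refine sum_comp_le' ((Finset.univ : Finset (Fin d → Fin q)) ×ˢ gridEdgesD d m)
        (gridEdgesD d n)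
        (fun p => (ι p.1 p.2.1, ι p.1 p.2.2)) ?_ ?_
        (fun e => ψ (Φ y e.1) (Φ y e.2)) (fun _ _ => hψ _ _)
      · intro p hp p' hp' hpp
        have h1' := congrArg Prod.fst hpp
        have h2' := congrArg Prod.snd hpp
        simp only at h1' h2'
        obtain ⟨hb, hu⟩ := hιinj _ _ _ _ h1'
        obtain ⟨_, hv⟩ := hιinj _ _ _ _ h2'
        have : p.2 = p'.2 := Prod.ext hu hv
        exact Prod.ext hb this
      · intro p hp
        have hpe : p.2 ∈ gridEdgesD d m := (Finset.mem_product.1 hp).2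
        have hex : ∃ i : Fin d, ((p.2.1 i : ℕ) + 1 = (p.2.2 i : ℕ)) ∧
            ∀ j : Fin d, j ≠ i → p.2.1 j = p.2.2 j := by
          simpa [gridEdgesD] using hpe
        obtain ⟨i, hi1, hi2⟩ := hex
        have : ∃ i : Fin d, (((ι p.1 p.2.1) i : ℕ) + 1 = ((ι p.1 p.2.2) i : ℕ)) ∧
            ∀ j : Fin d, j ≠ i → (ι p.1 p.2.1) j = (ι p.1 p.2.2) j := by
          refine ⟨i, ?_, ?_⟩
          · rw [hιval, hιval]; omega
          · intro j hj
            apply Fin.ext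
            rw [hιval, hιval, hi2 j hj]
        simpa [gridEdgesD] using this
  -- final chain
  have hcard : Fintype.card (Fin d → Fin q) = q ^ d := by simp [Fintype.card_fun]
  calc gridZD d m φ ψ ^ (q ^ d)
      = ∏ _b : Fin d → Fin q, gridZD d m φ ψ := by
        rw [Finset.prod_const, Finset.card_univ, hcard]
    _ = ∑ y : (Fin d → Fin q) → ((Fin d → Fin m) → Bool),
          ∏ b, Real.exp (∑ v, φ (y b v) + ∑ e ∈ gridEdgesD d m, ψ (y b e.1) (y b e.2)) := by
        rw [show gridZD d m φ ψ = ∑ z : (Fin d → Fin m) → Bool,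
            Real.exp (∑ v, φ (z v) + ∑ e ∈ gridEdgesD d m, ψ (z e.1) (z e.2)) from rfl]
        exact Fintype.prod_sum _
    _ = ∑ y : (Fin d → Fin q) → ((Fin d → Fin m) → Bool),
          Real.exp (∑ b, (∑ v, φ (y b v) + ∑ e ∈ gridEdgesD d m, ψ (y b e.1) (y b e.2))) := by
        refine Finset.sum_congr rfl fun y _ => ?_
        rw [Real.exp_sum]
    _ ≤ ∑ y : (Fin d → Fin q) → ((Fin d → Fin m) → Bool),
          Real.exp (∑ w, φ (Φ y w) + ∑ e ∈ gridEdgesD d n, ψ (Φ y e.1) (Φ y e.2)) :=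
        Finset.sum_le_sum fun y _ => Real.exp_le_exp.2 (hE y)
    _ = ∑ x ∈ Finset.image Φ Finset.univ,
          Real.exp (∑ w, φ (x w) + ∑ e ∈ gridEdgesD d n, ψ (x e.1) (x e.2)) := by
        rw [Finset.sum_image (fun x _ y _ h => hΦinj h)]
    _ ≤ gridZD d n φ ψ :=
        Finset.sum_le_sum_of_subset_of_nonneg (Finset.subset_univ _)
          (fun _ _ _ => (Real.exp_pos _).le)

end Aux

/-- For the regular binary MRF on the `d`-dimensional grid
with nonnegative potentials, the normalized log-partition function
`(1/n^d) log Z_n` converges to a finite positive limit as `n → ∞`. -/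
theorem grid_free_energy_limit_exists (d : ℕ) (hd : 1 ≤ d)
    (φ : Bool → ℝ) (ψ : Bool → Bool → ℝ)
    (hφ : ∀ s, 0 ≤ φ s) (hψ : ∀ a b, 0 ≤ ψ a b) :
    ∃ A : ℝ, 0 < A ∧
      Filter.Tendsto (fun n : ℕ => Real.log (gridZD d n φ ψ) / (n : ℝ) ^ d)
        Filter.atTop (nhds A) := by
  classical
  open Filter in
  set C : ℝ := (φ true + φ false) +
      d * (ψ true true + ψ true false + ψ false true + ψ false false) with hCdef
  set a : ℕ → ℝ := fun n => Real.log (gridZD d n φ ψ) / (n : ℝ) ^ d with hadef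
  have hZpos : ∀ n, 0 < gridZD d n φ ψ := fun n =>
    lt_of_lt_of_le (by positivity) (gridZD_pos d n φ ψ hφ hψ)
  have hlog_low : ∀ n : ℕ, (n:ℝ) ^ d * Real.log 2 ≤ Real.log (gridZD d n φ ψ) := by
    intro n
    have h1 := Real.log_le_log (by positivity) (gridZD_pos d n φ ψ hφ hψ)
    rw [Real.log_pow] at h1
    calc (n:ℝ) ^ d * Real.log 2 = ((n ^ d : ℕ) : ℝ) * Real.log 2 := by push_cast; ring
      _ ≤ Real.log (gridZD d n φ ψ) := h1
  have hlog_up : ∀ n : ℕ, Real.log (gridZD d n φ ψ) ≤ (n:ℝ) ^ d * (Real.log 2 + C) := by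
    intro n
    have h1 := Real.log_le_log (hZpos n) (gridZD_le d n hd φ ψ hφ hψ)
    rw [Real.log_mul (by positivity) (Real.exp_pos _).ne', Real.log_exp, Real.log_pow] at h1
    calc Real.log (gridZD d n φ ψ)
        ≤ ((n ^ d : ℕ) : ℝ) * Real.log 2 + (n:ℝ) ^ d * C := h1
      _ = (n:ℝ) ^ d * (Real.log 2 + C) := by push_cast; ring
  have hnpow : ∀ n : ℕ, 1 ≤ n → (0:ℝ) < (n:ℝ) ^ d := by
    intro n hn
    have : (0:ℝ) < (n:ℝ) := by exact_mod_cast hn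
    positivity
  have ha_low : ∀ n, 1 ≤ n → Real.log 2 ≤ a n := by
    intro n hn
    rw [hadef]
    simp only
    rw [le_div_iff₀ (hnpow n hn)]
    calc Real.log 2 * (n:ℝ) ^ d = (n:ℝ) ^ d * Real.log 2 := by ring
      _ ≤ _ := hlog_low n
  have ha_up : ∀ n, 1 ≤ n → a n ≤ Real.log 2 + C := by
    intro n hn
    rw [hadef]
    simp only
    rw [div_le_iff₀ (hnpow n hn)]
    calc Real.log (gridZD d n φ ψ) ≤ (n:ℝ) ^ d * (Real.log 2 + C) := hlog_up n
      _ = (Real.log 2 + C) * (n:ℝ) ^ d := by ring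
  have hlog2pos : (0:ℝ) < Real.log 2 := Real.log_pos (by norm_num)
  -- superadditivity in normalized form
  have hkey : ∀ m n : ℕ, 1 ≤ m → 1 ≤ n →
      (((n / m * m : ℕ) : ℝ) / (n:ℝ)) ^ d * a m ≤ a n := by
    intro m n hm hn
    by_cases hq : n / m = 0
    · rw [hq]
      simp only [Nat.zero_mul, Nat.cast_zero, zero_div]
      rw [zero_pow (by omega : d ≠ 0), zero_mul]
      exact le_trans hlog2pos.le (ha_low n hn)
    · have hq1 : 1 ≤ n / m := Nat.one_le_iff_ne_zero.2 hq
      have hsup := gridZD_superadd d hd φ ψ hφ hψ m (n / m) n hm hq1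
        (Nat.div_mul_le_self n m)
      have hlogm := Real.log_le_log (pow_pos (hZpos m) _) hsup
      rw [Real.log_pow] at hlogm
      have hc : (((n / m) ^ d : ℕ) : ℝ) = ((n / m : ℕ) : ℝ) ^ d := by push_cast; ring
      rw [hc] at hlogm
      have hmpow : (0:ℝ) < (m:ℝ) ^ d := hnpow m hm
      have hnpow' : (0:ℝ) < (n:ℝ) ^ d := hnpow n hn
      rw [hadef]
      simp only
      calc (((n / m * m : ℕ) : ℝ) / (n:ℝ)) ^ d * (Real.log (gridZD d m φ ψ) / (m:ℝ) ^ d)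
          = (((n / m : ℕ) : ℝ) ^ d * Real.log (gridZD d m φ ψ)) / (n:ℝ) ^ d := by
            push_cast
            rw [div_pow, mul_pow]
            field_simp
        _ ≤ Real.log (gridZD d n φ ψ) / (n:ℝ) ^ d :=
            (div_le_div_iff_of_pos_right hnpow').mpr hlogm
  -- liminf / limsup argument
  set L := Filter.liminf a Filter.atTop with hLdef
  set U := Filter.limsup a Filter.atTop with hUdef
  have hbddU : Filter.IsBoundedUnder (· ≤ ·) Filter.atTop a :=
    ⟨Real.log 2 + C, Filter.eventually_map.2
      ((Filter.eventually_ge_atTop 1).mono fun n hn => ha_up n hn)⟩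
  have hbddL : Filter.IsBoundedUnder (· ≥ ·) Filter.atTop a :=
    ⟨Real.log 2, Filter.eventually_map.2
      ((Filter.eventually_ge_atTop 1).mono fun n hn => ha_low n hn)⟩
  have hLU : L ≤ U := Filter.liminf_le_limsup hbddU hbddL
  have hUL : U ≤ L := by
    refine le_of_forall_pos_le_add ?_
    intro ε hε
    have hfreq : ∃ᶠ n in Filter.atTop, U - ε < a n :=
      Filter.frequently_lt_of_lt_limsup hbddL.isCoboundedUnder_le (by linarith)
    obtain ⟨m, hma, hm1⟩ :=
      (hfreq.and_eventually (Filter.eventually_ge_atTop 1)).exists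
    -- tendsto of the comparison sequence
    have hratio : Filter.Tendsto (fun n : ℕ => ((n / m * m : ℕ) : ℝ) / (n:ℝ))
        Filter.atTop (nhds 1) := by
      have hlow : Filter.Tendsto (fun n : ℕ => 1 - (m:ℝ) / (n:ℝ))
          Filter.atTop (nhds 1) := by
        have := tendsto_const_div_atTop_nhds_zero_nat (m:ℝ)
        have h2 := ((tendsto_const_nhds :
          Filter.Tendsto (fun _ : ℕ => (1:ℝ)) Filter.atTop (nhds 1)).sub this)
        simpa using h2
      refine tendsto_of_tendsto_of_tendsto_of_le_of_le' hlow tendsto_const_nhds ?_ ?_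
      · filter_upwards [Filter.eventually_ge_atTop 1] with n hn
        have hnpos : (0:ℝ) < (n:ℝ) := by exact_mod_cast hn
        rw [sub_div' hnpos.ne', div_le_div_iff₀ hnpos hnpos]
        have hnat : n ≤ n / m * m + m := by
          have h1 := Nat.div_add_mod n m
          rw [Nat.mul_comm] at h1
          have h2 : n % m < m := Nat.mod_lt _ (by omega)
          omega
        have : (n:ℝ) ≤ ((n / m * m : ℕ) : ℝ) + (m:ℝ) := by exact_mod_cast hnat
        nlinarith
      · filter_upwards [Filter.eventually_ge_atTop 1] with n hn
        have hnpos : (0:ℝ) < (n:ℝ) := by exact_mod_cast hn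
        rw [div_le_one hnpos]
        exact_mod_cast Nat.div_mul_le_self n m
    have hgt : Filter.Tendsto (fun n : ℕ => (((n / m * m : ℕ) : ℝ) / (n:ℝ)) ^ d * a m)
        Filter.atTop (nhds (a m)) := by
      have := (hratio.pow d).mul_const (a m)
      simpa using this
    have hALm : a m ≤ L := by
      have hliminfg : Filter.liminf
          (fun n : ℕ => (((n / m * m : ℕ) : ℝ) / (n:ℝ)) ^ d * a m) Filter.atTop = a m :=
        hgt.liminf_eq
      rw [hLdef, ← hliminfg]
      refine Filter.liminf_le_liminf ?_ hgt.isBoundedUnder_ge hbddU.isCoboundedUnder_ge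
      filter_upwards [Filter.eventually_ge_atTop 1] with n hn
      exact hkey m n hm1 hn
    linarith
  have hLeqU : Filter.limsup a Filter.atTop = L := le_antisymm hUL hLU
  refine ⟨L, ?_, ?_⟩
  · have h1 : Real.log 2 ≤ L := by
      rw [hLdef]
      refine Filter.le_liminf_of_le hbddU.isCoboundedUnder_ge ?_
      filter_upwards [Filter.eventually_ge_atTop 1] with n hn
      exact ha_low n hn
    linarith
  · exact tendsto_of_liminf_eq_limsup rfl hLeqU hbddU hbddL
end

section
/- Let G = (V, E) have doubling dimension ρ (with respect to the shortest-path metric). Define the line graph 𝒢 = (E, ℰ) where two edges of G are adjacent in 𝒢 iff they share a vertex of G. Then the doubling dimension of 𝒢 (with respect to its shortest-path metric) is at most 2ρ + 1. -/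
/-- Ball of radius `r` around `v` in the shortest-path metric of the graph `H`. -/
def graphBall {W : Type*} (H : SimpleGraph W) (v : W) (r : ℝ) : Set W :=
  {u | (H.dist v u : ℝ) < r}

/-- `H` has doubling dimension at most `ρ` (w.r.t. its shortest-path metric):
every ball of radius `r` is covered by at most `2^ρ` balls of radius `r/2`. -/
def HasDoublingDim {W : Type*} (H : SimpleGraph W) (ρ : ℕ) : Prop :=
  ∀ (v : W) (r : ℝ), ∃ s : Finset W, s.card ≤ 2 ^ ρ ∧
    graphBall H v r ⊆ ⋃ y ∈ s, graphBall H y (r / 2)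

section Aux

variable {V : Type*} {G : SimpleGraph V}

/-- Walk upper bound: from a walk in `G` between endpoints of two edges, get a
line-graph walk of length at most one more. -/
lemma lineGraph_walk_of_walk : ∀ {v w : V} (p : G.Walk v w) (e f : G.edgeSet),
    v ∈ (e : Sym2 V) → w ∈ (f : Sym2 V) →
    ∃ q : G.lineGraph.Walk e f, q.length ≤ p.length + 1 := by
  intro v w p
  induction p with
  | nil =>
    intro e f hv hw
    by_cases hef : e = f
    · subst hef; exact ⟨.nil, by simp⟩
    · exact ⟨.cons (SimpleGraph.lineGraph_adj_iff_exists.2 ⟨hef, _, hv, hw⟩) .nil, by simp⟩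
  | @cons a b c h p' ih =>
    intro e f hv hw
    have hg : s(a, b) ∈ G.edgeSet := h
    set g : G.edgeSet := ⟨s(a, b), hg⟩ with hgdef
    have hx : b ∈ (g : Sym2 V) := by simp [hgdef]
    obtain ⟨q, hq⟩ := ih g f hx hw
    by_cases heg : e = g
    · subst heg
      exact ⟨q, by simp only [SimpleGraph.Walk.length_cons]; omega⟩
    · have hag : a ∈ (g : Sym2 V) := by simp [hgdef]
      refine ⟨.cons (SimpleGraph.lineGraph_adj_iff_exists.2 ⟨heg, a, hv, hag⟩) q, ?_⟩
      simp only [SimpleGraph.Walk.length_cons]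
      omega

lemma exists_mem_sym2 (z : Sym2 V) : ∃ a b : V, z = s(a, b) := by
  induction z using Sym2.ind with
  | _ a b => exact ⟨a, b, rfl⟩

lemma lineGraph_reachable (hconn : G.Connected) (e f : G.edgeSet) :
    G.lineGraph.Reachable e f := by
  obtain ⟨a, b, hab⟩ := exists_mem_sym2 (e : Sym2 V)
  obtain ⟨c, d, hcd⟩ := exists_mem_sym2 (f : Sym2 V)
  obtain ⟨p⟩ := hconn a c
  obtain ⟨q, -⟩ := lineGraph_walk_of_walk p e f (by rw [hab]; exact Sym2.mem_mk_left a b)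
    (by rw [hcd]; exact Sym2.mem_mk_left c d)
  exact ⟨q⟩

/-- distance in the line graph is at most one more than distance between endpoints. -/
lemma lineGraph_dist_le (hconn : G.Connected) {e f : G.edgeSet} {v w : V}
    (hv : v ∈ (e : Sym2 V)) (hw : w ∈ (f : Sym2 V)) :
    G.lineGraph.dist e f ≤ G.dist v w + 1 := by
  obtain ⟨p, hp⟩ := hconn.exists_walk_length_eq_dist v w
  obtain ⟨q, hq⟩ := lineGraph_walk_of_walk p e f hv hw
  calc G.lineGraph.dist e f ≤ q.length := SimpleGraph.dist_le q
    _ ≤ p.length + 1 := hq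
    _ = G.dist v w + 1 := by rw [hp]

/-- Walk lower bound: along a line-graph walk, endpoints move slowly. -/
lemma dist_le_lineGraph_walk (hconn : G.Connected) :
    ∀ {e f : G.edgeSet} (q : G.lineGraph.Walk e f) (v : V), v ∈ (e : Sym2 V) →
    ∃ w, w ∈ (f : Sym2 V) ∧ G.dist v w ≤ q.length := by
  intro e f q
  induction q with
  | nil => intro v hv; exact ⟨v, hv, by simp⟩
  | @cons e g f h q' ih =>
    intro v hv
    obtain ⟨hne, x, hx1, hx2⟩ := SimpleGraph.lineGraph_adj_iff_exists.1 h
    obtain ⟨w, hw, hd⟩ := ih x hx2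
    have h1 : G.dist v x ≤ 1 := by
      by_cases hvx : v = x
      · subst hvx; simp [SimpleGraph.dist_self]
      · have he : (e : Sym2 V) = s(v, x) := (Sym2.mem_and_mem_iff hvx).1 ⟨hv, hx1⟩
        have hadj : G.Adj v x := by
          have := e.2; rw [he, SimpleGraph.mem_edgeSet] at this; exact this
        simpa using SimpleGraph.dist_le hadj.toWalk
    refine ⟨w, hw, ?_⟩
    have htri := hconn.dist_triangle (u := v) (v := x) (w := w)
    simp only [SimpleGraph.Walk.length_cons]
    omega

lemma exists_close_endpoint (hconn : G.Connected) {e f : G.edgeSet} {v : V}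
    (hv : v ∈ (e : Sym2 V)) :
    ∃ w, w ∈ (f : Sym2 V) ∧ G.dist v w ≤ G.lineGraph.dist e f := by
  obtain ⟨q, hq⟩ := (lineGraph_reachable hconn e f).exists_walk_length_eq_dist
  obtain ⟨w, hw, hd⟩ := dist_le_lineGraph_walk hconn q v hv
  exact ⟨w, hw, hq ▸ hd⟩

/-- Doubling gives a degree-type bound: the set of edges through a vertex has
size at most `2^ρ`. -/
lemma card_edges_through_le {ρ : ℕ} (hconn : G.Connected) (hdoub : HasDoublingDim G ρ)
    (u : V) : {f : G.edgeSet | u ∈ (f : Sym2 V)}.ncard ≤ 2 ^ ρ := by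
  classical
  obtain ⟨s, hs, hcov⟩ := hdoub u 2
  have hball : graphBall G u 2 ⊆ ↑s := by
    intro x hx
    obtain ⟨y, hy, hxy⟩ := Set.mem_iUnion₂.1 (hcov hx)
    have : (G.dist y x : ℝ) < 2 / 2 := hxy
    have h0 : G.dist y x = 0 := by
      have : (G.dist y x : ℝ) < 1 := by linarith
      exact_mod_cast Nat.lt_one_iff.1 (by exact_mod_cast this)
    rwa [← hconn.dist_eq_zero_iff.1 h0]
  have key : ∀ (f : G.edgeSet) (hmem : u ∈ (f : Sym2 V)),
      Sym2.Mem.other hmem ∈ (↑s : Set V) := by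
    intro f hmem
    have hspec := Sym2.other_spec hmem
    have hadj : G.Adj u (Sym2.Mem.other hmem) := by
      have := f.2; rw [← hspec, SimpleGraph.mem_edgeSet] at this; exact this
    apply hball
    have : G.dist u (Sym2.Mem.other hmem) ≤ 1 := by simpa using SimpleGraph.dist_le hadj.toWalk
    show (G.dist u (Sym2.Mem.other hmem) : ℝ) < 2
    have : (G.dist u (Sym2.Mem.other hmem) : ℝ) ≤ 1 := by exact_mod_cast this
    linarith
  have hinj : Set.InjOn (fun f : G.edgeSet =>
      if hf : u ∈ (f : Sym2 V) then Sym2.Mem.other hf else u)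
      {f : G.edgeSet | u ∈ (f : Sym2 V)} := by
    intro f1 h1 f2 h2 heq
    simp only [Set.mem_setOf_eq] at h1 h2
    simp only [dif_pos h1, dif_pos h2] at heq
    apply Subtype.ext
    rw [← Sym2.other_spec h1, ← Sym2.other_spec h2, heq]
  have := Set.ncard_le_ncard_of_injOn _
    (fun f hf => by
      simp only [Set.mem_setOf_eq] at hf
      rw [dif_pos hf]; exact key f hf) hinj (s.finite_toSet)
  calc {f : G.edgeSet | u ∈ (f : Sym2 V)}.ncard ≤ (↑s : Set V).ncard := this
    _ = s.card := Set.ncard_coe_finset s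
    _ ≤ 2 ^ ρ := hs

end Aux

/-- If a connected graph `G` has doubling dimension at most
`ρ`, then its line graph (vertices = edges of `G`, adjacent iff they share an
endpoint) has doubling dimension at most `2ρ + 1`. -/
theorem lineGraph_doublingDim_le {V : Type*} [Fintype V]
    (G : SimpleGraph V) (hconn : G.Connected)
    (ρ : ℕ) (hdoub : HasDoublingDim G ρ) :
    HasDoublingDim G.lineGraph (2 * ρ + 1) := by
  classical
  intro e r
  obtain ⟨u, v', heuv⟩ := exists_mem_sym2 (e : Sym2 V)
  have hu : u ∈ (e : Sym2 V) := by rw [heuv]; exact Sym2.mem_mk_left u v'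
  have hv' : v' ∈ (e : Sym2 V) := by rw [heuv]; exact Sym2.mem_mk_right u v'
  by_cases hr : r ≤ 2
  · -- small radius: the ball itself is small, cover by singletons
    have hfin : (graphBall G.lineGraph e r).Finite := Set.toFinite _
    refine ⟨hfin.toFinset, ?_, ?_⟩
    · -- card bound
      have hsub : graphBall G.lineGraph e r ⊆
          {f : G.edgeSet | u ∈ (f : Sym2 V)} ∪ {f : G.edgeSet | v' ∈ (f : Sym2 V)} := by
        intro f hf
        have hdist : (G.lineGraph.dist e f : ℝ) < r := hf
        have hle1 : G.lineGraph.dist e f ≤ 1 := by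
          have : (G.lineGraph.dist e f : ℝ) < 2 := lt_of_lt_of_le hdist hr
          have : G.lineGraph.dist e f < 2 := by exact_mod_cast this
          omega
        rcases Nat.lt_or_ge (G.lineGraph.dist e f) 1 with h0 | h1
        · have h0 : G.lineGraph.dist e f = 0 := by omega
          have : e = f := (lineGraph_reachable hconn e f).dist_eq_zero_iff.1 h0
          subst this
          exact Or.inl hu
        · have hd1 : G.lineGraph.dist e f = 1 := le_antisymm hle1 h1
          have hadj : G.lineGraph.Adj e f := SimpleGraph.dist_eq_one_iff_adj.1 hd1
          obtain ⟨-, x, hx1, hx2⟩ := SimpleGraph.lineGraph_adj_iff_exists.1 hadj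
          rw [heuv, Sym2.mem_iff] at hx1
          rcases hx1 with rfl | rfl
          · exact Or.inl hx2
          · exact Or.inr hx2
      have hcard : (graphBall G.lineGraph e r).ncard ≤ 2 ^ (2 * ρ + 1) := by
        have h1 := card_edges_through_le hconn hdoub u
        have h2 := card_edges_through_le hconn hdoub v'
        have := Set.ncard_le_ncard hsub (Set.toFinite _)
        have hun := Set.ncard_union_le {f : G.edgeSet | u ∈ (f : Sym2 V)}
          {f : G.edgeSet | v' ∈ (f : Sym2 V)}
        have hpow : 2 ^ ρ + 2 ^ ρ ≤ 2 ^ (2 * ρ + 1) := by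
          have : 2 ^ ρ + 2 ^ ρ = 2 ^ (ρ + 1) := by ring
          rw [this]
          exact Nat.pow_le_pow_right (by norm_num) (by omega)
        omega
      rwa [Set.ncard_eq_toFinset_card _ hfin] at hcard
    · -- coverage: each point covers itself
      intro f hf
      apply Set.mem_iUnion₂.2
      refine ⟨f, hfin.mem_toFinset.2 hf, ?_⟩
      have hdist : (G.lineGraph.dist e f : ℝ) < r := hf
      have hr0 : 0 < r := lt_of_le_of_lt (by positivity) hdist
      show (G.lineGraph.dist f f : ℝ) < r / 2
      rw [SimpleGraph.dist_self]
      push_cast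
      linarith
  · -- large radius: r > 2
    push_neg at hr
    obtain ⟨s₁, hs₁, hcov₁⟩ := hdoub u r
    have hch : ∀ y : V, ∃ t : Finset V, t.card ≤ 2 ^ ρ ∧
        graphBall G y (r / 2) ⊆ ⋃ z ∈ t, graphBall G z (r / 2 / 2) := fun y => hdoub y (r / 2)
    choose cover₂ hcard₂ hcov₂ using hch
    set T : Finset V := s₁.biUnion cover₂ with hT
    have hTcard : T.card ≤ 2 ^ (2 * ρ) := by
      calc T.card ≤ ∑ y ∈ s₁, (cover₂ y).card := Finset.card_biUnion_le
        _ ≤ ∑ _y ∈ s₁, 2 ^ ρ := Finset.sum_le_sum fun y _ => hcard₂ y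
        _ = s₁.card * 2 ^ ρ := by rw [Finset.sum_const, smul_eq_mul]
        _ ≤ 2 ^ ρ * 2 ^ ρ := Nat.mul_le_mul_right _ hs₁
        _ = 2 ^ (2 * ρ) := by rw [← pow_add]; ring_nf
    -- for each vertex pick an incident edge
    have hex : ∀ z : V, ∃ g : G.edgeSet, z ∈ (g : Sym2 V) := by
      intro z
      have hne : u ≠ v' := by
        intro h
        have := e.2
        rw [heuv, h, SimpleGraph.mem_edgeSet] at this
        exact G.irrefl this
      have : ∃ w : V, w ≠ z := by
        rcases eq_or_ne u z with rfl | h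
        · exact ⟨v', fun hh => hne hh.symm⟩
        · exact ⟨u, h⟩
      obtain ⟨w, hw⟩ := this
      obtain ⟨p⟩ := hconn z w
      cases p with
      | nil => exact absurd rfl hw.symm
      | cons h p' =>
        exact ⟨⟨s(z, _), h⟩, Sym2.mem_mk_left _ _⟩
    set F : V → G.edgeSet := fun z => (hex z).choose with hF
    refine ⟨T.image F, ?_, ?_⟩
    · calc (T.image F).card ≤ T.card := Finset.card_image_le
        _ ≤ 2 ^ (2 * ρ) := hTcard
        _ ≤ 2 ^ (2 * ρ + 1) := Nat.pow_le_pow_right (by norm_num) (by omega)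
    · intro f hf
      have hdist : (G.lineGraph.dist e f : ℝ) < r := hf
      obtain ⟨w, hwf, hdvw⟩ := exists_close_endpoint hconn (f := f) hu
      have hw_ball : w ∈ graphBall G u r := by
        show (G.dist u w : ℝ) < r
        calc (G.dist u w : ℝ) ≤ (G.lineGraph.dist e f : ℝ) := by exact_mod_cast hdvw
          _ < r := hdist
      obtain ⟨y, hy, hwy⟩ := Set.mem_iUnion₂.1 (hcov₁ hw_ball)
      obtain ⟨z, hz, hwz⟩ := Set.mem_iUnion₂.1 (hcov₂ y hwy)
      have hzT : z ∈ T := Finset.mem_biUnion.2 ⟨y, hy, hz⟩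
      have hzg : z ∈ ((F z : G.edgeSet) : Sym2 V) := (hex z).choose_spec
      apply Set.mem_iUnion₂.2
      refine ⟨F z, Finset.mem_image.2 ⟨z, hzT, rfl⟩, ?_⟩
      show (G.lineGraph.dist (F z) f : ℝ) < r / 2
      have hle : G.lineGraph.dist (F z) f ≤ G.dist z w + 1 := lineGraph_dist_le hconn hzg hwf
      have hb : (G.dist z w : ℝ) < r / 4 := by
        have : (G.dist z w : ℝ) < r / 2 / 2 := hwz
        linarith
      have hcast : (G.lineGraph.dist (F z) f : ℝ) ≤ (G.dist z w : ℝ) + 1 := by exact_mod_cast hle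
      rcases Nat.eq_zero_or_pos (G.dist z w) with h0 | h1
      · rw [h0] at hcast; push_cast at hcast; linarith
      · have : (1 : ℝ) ≤ (G.dist z w : ℝ) := by exact_mod_cast h1
        linarith
end

section
/- Consider a pairwise MRF on finite graph G = (V, E) with nonnegative potentials, and a matching M ⊆ E. Then log Z ≥ ∑_{(i,j)∈M} (ψ_{ij}^U − ψ_{ij}^L), where ψ_{ij}^U and ψ_{ij}^L are the max and min of ψ_{ij} over Σ². -/
open scoped BigOperators

/-- For a pairwise MRF with nonnegative potentials and any
matching `M ⊆ E`, `log Z ≥ ∑_{(i,j)∈M} (ψ_{ij}^U − ψ_{ij}^L)`. -/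
theorem log_partition_ge_matching {V S : Type*} [Fintype V] [DecidableEq V]
    [Fintype S] [Nonempty S]
    (E : Finset (V × V))
    (hsimple : ∀ e ∈ E, e.1 ≠ e.2)
    (hnodup : ∀ e ∈ E, (e.2, e.1) ∉ E)
    (φ : V → S → ℝ) (ψ : V × V → S → S → ℝ)
    (hφ : ∀ v s, 0 ≤ φ v s) (hψ : ∀ e a b, 0 ≤ ψ e a b)
    (M : Finset (V × V)) (hME : M ⊆ E)
    (hmatch : ∀ e ∈ M, ∀ f ∈ M, e ≠ f →
      e.1 ≠ f.1 ∧ e.1 ≠ f.2 ∧ e.2 ≠ f.1 ∧ e.2 ≠ f.2) :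
    ∑ e ∈ M, (psiU ψ e - psiL ψ e) ≤ Real.log (mrfZ E φ ψ) := by
  classical
  have hmax : ∀ e : V × V, ∃ p : S × S, ∀ q : S × S, ψ e q.1 q.2 ≤ ψ e p.1 p.2 :=
    fun e => Finite.exists_max (fun p : S × S => ψ e p.1 p.2)
  choose pmax hpmax using hmax
  have hpsiU : ∀ e, psiU ψ e = ψ e (pmax e).1 (pmax e).2 := by
    intro e
    simp only [psiU]
    refine le_antisymm (ciSup_le fun q => hpmax e q) ?_
    exact le_ciSup (Finite.bddAbove_range fun p : S × S => ψ e p.1 p.2) (pmax e)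
  have hpsiL : ∀ e, 0 ≤ psiL ψ e := fun e => by simp only [psiL]; exact le_ciInf fun p => hψ e p.1 p.2
  set x : V → S := fun v =>
    if h : ∃ f ∈ M, v = f.1 ∨ v = f.2 then
      (if v = h.choose.1 then (pmax h.choose).1 else (pmax h.choose).2)
    else Classical.arbitrary S with hxdef
  have hx1 : ∀ e ∈ M, x e.1 = (pmax e).1 ∧ x e.2 = (pmax e).2 := by
    intro e he
    constructor
    · have h : ∃ f ∈ M, e.1 = f.1 ∨ e.1 = f.2 := ⟨e, he, Or.inl rfl⟩
      simp only [hxdef, dif_pos h]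
      obtain ⟨hf, hor⟩ := h.choose_spec
      have hef : h.choose = e := by
        by_contra hne
        obtain ⟨a, b, c, d⟩ := hmatch e he h.choose hf (Ne.symm hne)
        rcases hor with h1 | h1
        · exact a h1
        · exact b h1
      rw [hef]
      simp
    · have h : ∃ f ∈ M, e.2 = f.1 ∨ e.2 = f.2 := ⟨e, he, Or.inr rfl⟩
      simp only [hxdef, dif_pos h]
      obtain ⟨hf, hor⟩ := h.choose_spec
      have hef : h.choose = e := by
        by_contra hne
        obtain ⟨a, b, c, d⟩ := hmatch e he h.choose hf (Ne.symm hne)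
        rcases hor with h1 | h1
        · exact c h1
        · exact d h1
      rw [hef]
      rw [if_neg (Ne.symm (hsimple e (hME he)))]
  have key : ∑ e ∈ M, (psiU ψ e - psiL ψ e) ≤ mrfEnergy E φ ψ x := by
    have h1 : ∑ e ∈ M, (psiU ψ e - psiL ψ e) ≤ ∑ e ∈ M, psiU ψ e :=
      Finset.sum_le_sum fun e _ => by linarith [hpsiL e]
    have h2 : ∑ e ∈ M, psiU ψ e = ∑ e ∈ M, ψ e (x e.1) (x e.2) :=
      Finset.sum_congr rfl fun e he => by rw [hpsiU e, (hx1 e he).1, (hx1 e he).2]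
    have h3 : ∑ e ∈ M, ψ e (x e.1) (x e.2) ≤ ∑ e ∈ E, ψ e (x e.1) (x e.2) :=
      Finset.sum_le_sum_of_subset_of_nonneg hME fun e _ _ => hψ e _ _
    have h4 : 0 ≤ ∑ v, φ v (x v) := Finset.sum_nonneg fun v _ => hφ v _
    unfold mrfEnergy
    linarith
  have hZpos : 0 < mrfZ E φ ψ := by
    unfold mrfZ
    exact Finset.sum_pos (fun y _ => Real.exp_pos _) ⟨x, Finset.mem_univ x⟩
  rw [Real.le_log_iff_exp_le hZpos]
  calc Real.exp (∑ e ∈ M, (psiU ψ e - psiL ψ e))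
      ≤ Real.exp (mrfEnergy E φ ψ x) := Real.exp_le_exp.mpr key
    _ ≤ mrfZ E φ ψ :=
        Finset.single_le_sum (fun y _ => (Real.exp_pos (mrfEnergy E φ ψ y)).le)
          (Finset.mem_univ x)
end

section
/- In the randomized decomposition algorithm DB-DIM on a graph G with shortest-path metric, when the algorithm terminates the removed set B_T disconnects the remaining vertices into components R_1,…,R_T, where each R_t is contained in a ball of radius K around the center u_{t−1} chosen in iteration t; in particular every connected component of V \ B_T has at most |B(u, K)| ≤ (2K)^ρ vertices if G has doubling dimension ρ. -/
/-- One run of the DB-DIM decomposition: given the list `qs` of random radii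
(drawn in `{1,…,K}`) and the current white set `W`, repeatedly pick a white
point `u = sel W _`, move the white points at distance exactly `q` from `u`
into the output (boundary) set `B`, discard (color red) the white points at
distance `< q` from `u`, and recurse on the remaining white points. -/
def runB {V : Type*} [Fintype V] [DecidableEq V] (d : V → V → ℕ)
    (sel : (W : Finset V) → W.Nonempty → V) :
    List ℕ → Finset V → Finset V
  | [], _ => ∅
  | q :: rest, W =>
    if h : W.Nonempty then
      W.filter (fun w => d (sel W h) w = q) ∪
        runB d sel rest (W.filter (fun w => q < d (sel W h) w))
    else ∅

/-- The distribution of the radius `Q ∈ {1,…,K}` used by DB-DIM, indexed by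
`i : Fin K` representing `Q = i + 1`: `Pr[Q = i+1] = ε (1-ε)^i` for `i+1 < K`
and `Pr[Q = K] = (1-ε)^(K-1)`. -/
noncomputable def qProb (ε : ℝ) (K : ℕ) (i : Fin K) : ℝ :=
  if (i : ℕ) + 1 < K then ε * (1 - ε) ^ (i : ℕ) else (1 - ε) ^ (K - 1)

/-- Doubling ball-size bound: a ball of radius `r ≤ 2^m` has at most `2^(ρ*m)`
vertices. -/
lemma ball_card_le_aux {V : Type*} [Fintype V] [DecidableEq V]
    (G : SimpleGraph V) (hconn : G.Connected) (ρ : ℕ)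
    (hdoub : ∀ (x : V) (r : ℝ), ∃ s : Finset V, s.card ≤ 2 ^ ρ ∧
      {u : V | (G.dist x u : ℝ) < r} ⊆ ⋃ y ∈ s, {u : V | (G.dist y u : ℝ) < r / 2}) :
    ∀ (m : ℕ) (x : V) (r : ℝ), r ≤ 2 ^ m →
      (Finset.univ.filter (fun u => (G.dist x u : ℝ) < r)).card ≤ 2 ^ (ρ * m) := by
  intro m
  induction m with
  | zero =>
    intro x r hr
    have hsub : (Finset.univ.filter (fun u => (G.dist x u : ℝ) < r)) ⊆ {x} := by
      intro u hu
      simp only [Finset.mem_filter, Finset.mem_univ, true_and] at hu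
      have : (G.dist x u : ℝ) < 1 := lt_of_lt_of_le hu (by simpa using hr)
      have hd : G.dist x u = 0 := by exact_mod_cast Nat.lt_one_iff.mp (by exact_mod_cast this)
      have := (hconn.dist_eq_zero_iff).mp hd
      simp [this.symm]
    calc (Finset.univ.filter (fun u => (G.dist x u : ℝ) < r)).card
        ≤ ({x} : Finset V).card := Finset.card_le_card hsub
      _ = 1 := Finset.card_singleton x
      _ ≤ 2 ^ (ρ * 0) := by simp
  | succ m ih =>
    intro x r hr
    obtain ⟨s, hs, hcov⟩ := hdoub x r
    have hsub : (Finset.univ.filter (fun u => (G.dist x u : ℝ) < r)) ⊆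
        s.biUnion (fun y => Finset.univ.filter (fun u => (G.dist y u : ℝ) < r / 2)) := by
      intro u hu
      simp only [Finset.mem_filter, Finset.mem_univ, true_and] at hu
      have := hcov hu
      simp only [Set.mem_iUnion, Set.mem_setOf_eq] at this
      obtain ⟨y, hy, hdy⟩ := this
      simp only [Finset.mem_biUnion]
      exact ⟨y, hy, by simp [hdy]⟩
    have hhalf : r / 2 ≤ 2 ^ m := by
      have : (2 : ℝ) ^ (m + 1) = 2 * 2 ^ m := by ring
      nlinarith [hr]
    calc (Finset.univ.filter (fun u => (G.dist x u : ℝ) < r)).card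
        ≤ (s.biUnion (fun y => Finset.univ.filter (fun u => (G.dist y u : ℝ) < r / 2))).card :=
          Finset.card_le_card hsub
      _ ≤ ∑ y ∈ s, (Finset.univ.filter (fun u => (G.dist y u : ℝ) < r / 2)).card :=
          Finset.card_biUnion_le
      _ ≤ ∑ _y ∈ s, 2 ^ (ρ * m) := Finset.sum_le_sum (fun y _ => ih y (r / 2) hhalf)
      _ = s.card * 2 ^ (ρ * m) := by simp [Finset.sum_const, mul_comm]
      _ ≤ 2 ^ ρ * 2 ^ (ρ * m) := by
          exact Nat.mul_le_mul_right _ hs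
      _ = 2 ^ (ρ * (m + 1)) := by rw [← pow_add]; ring_nf

/-- Main invariant of DB-DIM: if every already-removed non-blue (red) vertex
sits in a cluster sealed by the blue set `B₀` and contained in a ball of
radius `< K`, then the same holds after running the remaining iterations. -/
lemma runB_main {V : Type*} [Fintype V] [DecidableEq V]
    (G : SimpleGraph V) (hconn : G.Connected) (K : ℕ)
    (sel : (W : Finset V) → W.Nonempty → V) (hsel : ∀ W h, sel W h ∈ W) :
    ∀ (qs : List ℕ) (W B₀ : Finset V),
      (∀ q ∈ qs, 1 ≤ q ∧ q ≤ K) →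
      W.card ≤ qs.length →
      (∀ x ∈ W, x ∉ B₀) →
      (∀ x, x ∉ W → x ∉ B₀ →
        ∃ c, ∀ w (p : G.Walk x w), (∀ y ∈ p.support, y ∉ B₀) →
          G.dist c w < K ∧ w ∉ W) →
      ∀ u, u ∉ B₀ → u ∉ runB G.dist sel qs W →
        ∃ c, ∀ w (p : G.Walk u w),
          (∀ y ∈ p.support, y ∉ B₀ ∪ runB G.dist sel qs W) → G.dist c w < K := by
  intro qs
  induction qs with
  | nil =>
    intro W B₀ _ hcard _ inv u huB₀ _
    have hW : W = ∅ := Finset.card_eq_zero.mp (Nat.le_zero.mp hcard)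
    obtain ⟨c, hc⟩ := inv u (by simp [hW]) huB₀
    refine ⟨c, fun w p hp => ?_⟩
    exact (hc w p (fun y hy => by simpa [runB] using hp y hy)).1
  | cons q rest ihqs =>
    intro W B₀ hqs hcard hdisj inv u huB₀ huB
    by_cases h : W.Nonempty
    · set c := sel W h with hc
      set Bq := W.filter (fun w => G.dist c w = q) with hBq
      set W' := W.filter (fun w => q < G.dist c w) with hW'
      have hrun : runB G.dist sel (q :: rest) W = Bq ∪ runB G.dist sel rest W' := by
        simp [runB, dif_pos h, hBq, hW', hc]
      have hq1 : 1 ≤ q := (hqs q (by simp)).1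
      have hqK : q ≤ K := (hqs q (by simp)).2
      -- the center is red, so the white set strictly shrinks
      have hcW : c ∈ W := hsel W h
      have hcW' : c ∉ W' := by
        simp only [hW', Finset.mem_filter]
        rintro ⟨-, hlt⟩
        rw [SimpleGraph.dist_self] at hlt
        omega
      have hssub : W' ⊂ W := ⟨Finset.filter_subset _ _, fun hsub => hcW' (hsub hcW)⟩
      have hcard' : W'.card ≤ rest.length := by
        have := Finset.card_lt_card hssub
        simp only [List.length_cons] at hcard
        omega
      -- disjointness for the new blue set
      have hdisj' : ∀ x ∈ W', x ∉ B₀ ∪ Bq := by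
        intro x hx
        have hxW : x ∈ W := (Finset.filter_subset _ _) hx
        simp only [Finset.mem_union, not_or]
        refine ⟨hdisj x hxW, ?_⟩
        simp only [hBq, Finset.mem_filter]
        rintro ⟨-, heq⟩
        simp only [hW', Finset.mem_filter] at hx
        omega
      -- walks from a current red vertex avoiding B₀ ∪ Bq stay in the red cluster
      have key : ∀ (x w : V) (p : G.Walk x w), x ∈ W → G.dist c x < q →
          (∀ y ∈ p.support, y ∉ B₀ ∧ y ∉ Bq) → w ∈ W ∧ G.dist c w < q := by
        intro x w p
        induction p with
        | nil => intro hx hd _; exact ⟨hx, hd⟩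
        | @cons a b w' hadj p ih =>
          intro hx hd hsup
          have hbsup : b ∈ (SimpleGraph.Walk.cons hadj p).support := by
            simp [SimpleGraph.Walk.support_cons, SimpleGraph.Walk.start_mem_support]
          have hbB : b ∉ B₀ ∧ b ∉ Bq := hsup b hbsup
          have hdb : G.dist c b ≤ G.dist c a + 1 := by
            have ht := hconn.dist_triangle (u := c) (v := a) (w := b)
            have : G.dist a b = 1 := SimpleGraph.dist_eq_one_iff_adj.mpr hadj
            omega
          have hbW : b ∈ W := by
            by_contra hbW
            obtain ⟨c₀, hc₀⟩ := inv b hbW hbB.1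
            have := hc₀ a (SimpleGraph.Walk.cons (hadj.symm) SimpleGraph.Walk.nil)
              (by
                intro y hy
                have hy' : y = b ∨ y = a := by
                  simpa [SimpleGraph.Walk.support_cons] using hy
                rcases hy' with rfl | rfl
                · exact hbB.1
                · exact hdisj _ hx)
            exact this.2 hx
          have hdbq : G.dist c b < q := by
            have hne : G.dist c b ≠ q := by
              intro heq
              exact hbB.2 (by simp [hBq, Finset.mem_filter, hbW, heq])
            omega
          exact ih hbW hdbq (fun y hy => hsup y (by
            simp only [SimpleGraph.Walk.support_cons, List.mem_cons]; right; exact hy))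
      -- the new invariant
      have inv' : ∀ x, x ∉ W' → x ∉ B₀ ∪ Bq →
          ∃ c', ∀ w (p : G.Walk x w), (∀ y ∈ p.support, y ∉ B₀ ∪ Bq) →
            G.dist c' w < K ∧ w ∉ W' := by
        intro x hxW' hxB'
        simp only [Finset.mem_union, not_or] at hxB'
        by_cases hxW : x ∈ W
        · -- x is red in this iteration
          have hdx : G.dist c x < q := by
            have h1 : ¬ q < G.dist c x := by
              intro hlt; exact hxW' (by simp [hW', Finset.mem_filter, hxW, hlt])
            have h2 : G.dist c x ≠ q := by
              intro heq; exact hxB'.2 (by simp [hBq, Finset.mem_filter, hxW, heq])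
            omega
          refine ⟨c, fun w p hp => ?_⟩
          have hp' : ∀ y ∈ p.support, y ∉ B₀ ∧ y ∉ Bq := by
            intro y hy
            have := hp y hy
            simp only [Finset.mem_union, not_or] at this
            exact this
          obtain ⟨hwW, hwd⟩ := key x w p hxW hdx hp'
          refine ⟨lt_of_lt_of_le hwd hqK, ?_⟩
          simp only [hW', Finset.mem_filter]
          rintro ⟨-, hlt⟩
          omega
        · -- x was removed in an earlier iteration
          obtain ⟨c₀, hc₀⟩ := inv x hxW hxB'.1
          refine ⟨c₀, fun w p hp => ?_⟩
          have := hc₀ w p (fun y hy => by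
            have := hp y hy
            simp only [Finset.mem_union, not_or] at this
            exact this.1)
          exact ⟨this.1, fun hw => this.2 ((Finset.filter_subset _ _) hw)⟩
      -- apply the induction hypothesis
      have hqs' : ∀ q' ∈ rest, 1 ≤ q' ∧ q' ≤ K := fun q' hq' => hqs q' (by simp [hq'])
      have huB' : u ∉ B₀ ∪ Bq := by
        simp only [Finset.mem_union, not_or]
        refine ⟨huB₀, fun hu => huB ?_⟩
        rw [hrun]; exact Finset.mem_union_left _ hu
      have huR : u ∉ runB G.dist sel rest W' := by
        intro hu; exact huB (by rw [hrun]; exact Finset.mem_union_right _ hu)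
      obtain ⟨c', hc'⟩ := ihqs W' (B₀ ∪ Bq) hqs' hcard' hdisj' inv' u huB' huR
      refine ⟨c', fun w p hp => ?_⟩
      apply hc' w p
      intro y hy
      have := hp y hy
      rw [hrun] at this
      simp only [Finset.mem_union, not_or] at this ⊢
      exact ⟨⟨this.1, this.2.1⟩, this.2.2⟩
    · -- white set empty: nothing happens
      have hrun : runB G.dist sel (q :: rest) W = ∅ := by simp [runB, dif_neg h]
      rw [Finset.not_nonempty_iff_eq_empty] at h
      obtain ⟨c, hc⟩ := inv u (by simp [h]) huB₀
      refine ⟨c, fun w p hp => ?_⟩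
      exact (hc w p (fun y hy => by simpa [hrun] using hp y hy)).1

/-- Run DB-DIM on a connected graph `G` with its shortest-path
metric, with radii `qs` all in `{1,…,K}` and enough draws (`|V|` of them) to
exhaust the white set; let `B` be the output set. Then every connected
component of `V \ B` (vertices reachable from `u ∉ B` by walks avoiding `B`)
is contained in a ball of radius `K`; in particular, if `G` has doubling
dimension at most `ρ`, each such component has at most `(2K)^ρ` vertices. -/
theorem dbdim_component_size_le {V : Type*} [Fintype V] [DecidableEq V]
    (G : SimpleGraph V) (hconn : G.Connected)
    (ρ K : ℕ) (hK : 1 ≤ K)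
    (hdoub : ∀ (x : V) (r : ℝ), ∃ s : Finset V, s.card ≤ 2 ^ ρ ∧
      {u : V | (G.dist x u : ℝ) < r} ⊆ ⋃ y ∈ s, {u : V | (G.dist y u : ℝ) < r / 2})
    (sel : (W : Finset V) → W.Nonempty → V) (hsel : ∀ W h, sel W h ∈ W)
    (qs : List ℕ) (hqs : ∀ q ∈ qs, 1 ≤ q ∧ q ≤ K)
    (hlen : qs.length = Fintype.card V) :
    ∀ u : V, u ∉ runB G.dist sel qs Finset.univ →
      (∃ c : V, {w : V | ∃ p : G.Walk u w,
          ∀ x ∈ p.support, x ∉ runB G.dist sel qs Finset.univ}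
        ⊆ {w : V | G.dist c w < K}) ∧
      {w : V | ∃ p : G.Walk u w,
          ∀ x ∈ p.support, x ∉ runB G.dist sel qs Finset.univ}.ncard
        ≤ (2 * K) ^ ρ := by
  intro u hu
  obtain ⟨c, hc⟩ := runB_main G hconn K sel hsel qs Finset.univ ∅ hqs
    (by rw [Finset.card_univ, hlen]) (by simp) (by simp) u (by simp) hu
  have hsub : {w : V | ∃ p : G.Walk u w,
      ∀ x ∈ p.support, x ∉ runB G.dist sel qs Finset.univ} ⊆ {w : V | G.dist c w < K} := by
    rintro w ⟨p, hp⟩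
    exact hc w p (fun y hy => by simpa using hp y hy)
  refine ⟨⟨c, hsub⟩, ?_⟩
  -- ball-size bound from the doubling dimension
  set m := Nat.clog 2 K with hm
  have hKle : (K : ℝ) ≤ 2 ^ m := by exact_mod_cast Nat.le_pow_clog one_lt_two K
  have hball := ball_card_le_aux G hconn ρ hdoub m c (K : ℝ) hKle
  have h2m : 2 ^ m ≤ 2 * K := by
    rcases Nat.lt_or_ge K 2 with hK2 | hK2
    · interval_cases K
      · simp [hm, Nat.clog]
    · have hmpos : 0 < m := Nat.clog_pos one_lt_two hK2
      have := Nat.pow_pred_clog_lt_self (b := 2) one_lt_two (x := K) hK2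
      have h2 : 2 ^ m = 2 * 2 ^ (m - 1) := by
        rw [← pow_succ']
        congr 1
        omega
      rw [h2]
      have : 2 ^ (m - 1) < K := this
      omega
  have hsetball : {w : V | G.dist c w < K} =
      ↑(Finset.univ.filter (fun w => (G.dist c w : ℝ) < (K : ℝ))) := by
    ext w
    simp [Nat.cast_lt]
  calc {w : V | ∃ p : G.Walk u w,
          ∀ x ∈ p.support, x ∉ runB G.dist sel qs Finset.univ}.ncard
      ≤ {w : V | G.dist c w < K}.ncard := Set.ncard_le_ncard hsub (Set.toFinite _)
    _ = (Finset.univ.filter (fun w => (G.dist c w : ℝ) < (K : ℝ))).card := by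
        rw [hsetball, Set.ncard_coe_finset]
    _ ≤ 2 ^ (ρ * m) := hball
    _ = (2 ^ m) ^ ρ := by rw [← pow_mul, mul_comm]
    _ ≤ (2 * K) ^ ρ := Nat.pow_le_pow_left h2m ρ
end
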